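/- arXiv:2411.00191 — 8 statements merged into one kernel-verified Lean document; each statement's English description precedes it below -/
import Mathlib

section
/- Let μ be a probability measure on ℝ² whose marginals ν₁ (with CDF G) and ν₀ (with CDF F) have finite second moments. Then the product xy is μ-integrable and ∫_{ℝ²} x·y dμ(x,y) ≤ ∫₀¹ G⁻¹(u) F⁻¹(u) du, where G⁻¹(u) = inf{y : G(y) ≥ u} and F⁻¹(u) = inf{y : F(y) ≥ u} are the quantile functions. That is, among all couplings of ν₁ and ν₀, the cross-moment E[Y₁Y₀] is bounded above by its value under the comonotonic coupling (G⁻¹(U), F⁻¹(U)), U uniform on [0,1]. -/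
/-!
Hoeffding's representation `x * y = ∫∫ (𝟙{s < x} - 𝟙{s < 0}) (𝟙{t < y} - 𝟙{t < 0}) ds dt`,
integrated against a coupling `ρ` and exchanged by Fubini, writes `∫ x y dρ` as the integral over
`(s, t)` of an expression that depends on `ρ` only through its marginals and the joint tail
`ρ((s, ∞) × (t, ∞))`, and is increasing in the latter. That tail is at most the minimum of the
two marginal tails, and the comonotone coupling `(G⁻¹(U), F⁻¹(U))` attains this minimum, because
the Galois connection `G⁻¹(u) ≤ s ↔ u ≤ G(s)` gives `{u ∈ (0, 1) | s < G⁻¹(u)} = (G(s), 1)`.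
-/

open MeasureTheory Set

section SignedStep

noncomputable def signedStep (x s : ℝ) : ℝ := (Ioi s).indicator 1 x - (Ioi s).indicator 1 0

lemma signedStep_eq_indicator_sub (x : ℝ) :
    signedStep x = (Ico 0 x).indicator 1 - (Ico x 0).indicator 1 := by
  ext s
  simp only [signedStep, Pi.sub_apply, indicator_apply, mem_Ioi, mem_Ico, Pi.one_apply]
  split_ifs <;> grind

lemma abs_signedStep (x s : ℝ) :
    |signedStep x s| = (Ico 0 x).indicator 1 s + (Ico x 0).indicator 1 s := by
  simp only [signedStep, indicator_apply, mem_Ioi, mem_Ico, Pi.one_apply]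
  split_ifs <;> grind

lemma measurable_signedStep : Measurable (Function.uncurry signedStep) :=
  ((measurable_const.indicator (measurableSet_lt measurable_snd measurable_fst))).sub
    (measurable_const.indicator (measurableSet_lt measurable_snd measurable_const))

lemma integrable_indicator_Ico_one (a b : ℝ) : Integrable ((Ico a b).indicator (1 : ℝ → ℝ)) :=
  (integrable_indicator_iff measurableSet_Ico).2 <|
    integrableOn_const (by simp [Real.volume_Ico])

lemma integral_indicator_Ico_one (a b : ℝ) :
    ∫ s, (Ico a b).indicator (1 : ℝ → ℝ) s = max (b - a) 0 := by
  simp [integral_indicator_one measurableSet_Ico, measureReal_def, Real.volume_Ico,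
    ENNReal.toReal_ofReal']

lemma integrable_signedStep (x : ℝ) : Integrable (signedStep x) := by
  rw [signedStep_eq_indicator_sub]
  exact (integrable_indicator_Ico_one 0 x).sub (integrable_indicator_Ico_one x 0)

lemma integral_signedStep (x : ℝ) : ∫ s, signedStep x s = x := by
  rw [signedStep_eq_indicator_sub, integral_sub' (integrable_indicator_Ico_one 0 x)
    (integrable_indicator_Ico_one x 0), integral_indicator_Ico_one, integral_indicator_Ico_one]
  rcases le_total 0 x with h | h <;> simp [h]

lemma integral_abs_signedStep (x : ℝ) : ∫ s, |signedStep x s| = |x| := by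
  simp_rw [abs_signedStep]
  rw [integral_add (integrable_indicator_Ico_one 0 x) (integrable_indicator_Ico_one x 0),
    integral_indicator_Ico_one, integral_indicator_Ico_one]
  rcases le_total 0 x with h | h <;> simp [h, abs_of_nonneg, abs_of_nonpos]

lemma integral_signedStep_mul_signedStep (x y : ℝ) :
    ∫ q : ℝ × ℝ, signedStep x q.1 * signedStep y q.2 = x * y := by
  rw [Measure.volume_eq_prod, integral_prod_mul, integral_signedStep, integral_signedStep]

lemma integral_norm_signedStep_mul_signedStep (x y : ℝ) :
    ∫ q : ℝ × ℝ, ‖signedStep x q.1 * signedStep y q.2‖ = |x * y| := by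
  simp_rw [norm_mul, Real.norm_eq_abs]
  rw [Measure.volume_eq_prod, integral_prod_mul (f := fun s => |signedStep x s|)
    (g := fun t => |signedStep y t|), integral_abs_signedStep, integral_abs_signedStep, abs_mul]

end SignedStep

lemma integral_sub_const_mul_sub_const {α : Type*} [MeasurableSpace α] {μ : Measure α}
    [IsProbabilityMeasure μ] {f g : α → ℝ} (hf : Integrable f μ) (hg : Integrable g μ)
    (hfg : Integrable (fun x => f x * g x) μ) (a b : ℝ) :
    ∫ x, (f x - a) * (g x - b) ∂μ =
      ∫ x, f x * g x ∂μ - b * ∫ x, f x ∂μ - a * ∫ x, g x ∂μ + a * b := by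
  have h : ∀ x, (f x - a) * (g x - b) = (f x * g x - b * f x) - (a * g x - a * b) := fun x => by
    ring
  simp_rw [h]
  rw [integral_sub, integral_sub, integral_sub, integral_const_mul, integral_const_mul,
    integral_const]
  · simp only [probReal_univ, one_smul]
    ring
  all_goals fun_prop

section CrossMoment

variable {ρ ρ' : Measure (ℝ × ℝ)}

lemma integrable_signedStep_mul_signedStep_prod [SFinite ρ]
    (hρ : Integrable (fun p : ℝ × ℝ => p.1 * p.2) ρ) :
    Integrable (fun z : (ℝ × ℝ) × (ℝ × ℝ) => signedStep z.1.1 z.2.1 * signedStep z.1.2 z.2.2)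
      (ρ.prod volume) := by
  have hmeas : Measurable fun z : (ℝ × ℝ) × (ℝ × ℝ) =>
      signedStep z.1.1 z.2.1 * signedStep z.1.2 z.2.2 := by
    have := measurable_signedStep
    fun_prop
  refine (integrable_prod_iff hmeas.aestronglyMeasurable).2 ⟨?_, ?_⟩
  · refine Filter.Eventually.of_forall fun p => ?_
    rw [Measure.volume_eq_prod]
    exact (integrable_signedStep p.1).mul_prod (integrable_signedStep p.2)
  · simp_rw [integral_norm_signedStep_mul_signedStep]
    exact hρ.abs

lemma integral_fst_mul_snd_eq_integral_integral_signedStep [SFinite ρ]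
    (hρ : Integrable (fun p : ℝ × ℝ => p.1 * p.2) ρ) :
    ∫ p, p.1 * p.2 ∂ρ = ∫ q : ℝ × ℝ, ∫ p, signedStep p.1 q.1 * signedStep p.2 q.2 ∂ρ := by
  rw [← integral_integral_swap (integrable_signedStep_mul_signedStep_prod hρ)]
  simp_rw [integral_signedStep_mul_signedStep]

lemma integral_signedStep_fst_mul_signedStep_snd [IsProbabilityMeasure ρ] (s t : ℝ) :
    ∫ p, signedStep p.1 s * signedStep p.2 t ∂ρ =
      ρ.real (Ioi s ×ˢ Ioi t) - (Ioi t).indicator 1 0 * (ρ.map Prod.fst).real (Ioi s)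
        - (Ioi s).indicator 1 0 * (ρ.map Prod.snd).real (Ioi t)
        + (Ioi s).indicator 1 0 * (Ioi t).indicator 1 0 := by
  have marginal : ∀ (π : ℝ × ℝ → ℝ) (hπ : Measurable π) (a : ℝ),
      Integrable (fun p => (Ioi a).indicator (1 : ℝ → ℝ) (π p)) ρ ∧
        ∫ p, (Ioi a).indicator 1 (π p) ∂ρ = (ρ.map π).real (Ioi a) := fun π hπ a => by
    rw [← integral_indicator_one measurableSet_Ioi]
    exact ⟨((integrable_const 1).indicator measurableSet_Ioi).comp_measurable hπ,
      (integral_map hπ.aemeasurable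
        (aestronglyMeasurable_const.indicator measurableSet_Ioi)).symm⟩
  have joint : ∀ p : ℝ × ℝ, (Ioi s).indicator (1 : ℝ → ℝ) p.1 * (Ioi t).indicator 1 p.2 =
      (Ioi s ×ˢ Ioi t).indicator 1 p := fun p => Set.indicator_prod_one.symm
  have hst : MeasurableSet (Ioi s ×ˢ Ioi t) := measurableSet_Ioi.prod measurableSet_Ioi
  obtain ⟨hfi, hf⟩ := marginal Prod.fst measurable_fst s
  obtain ⟨hgi, hg⟩ := marginal Prod.snd measurable_snd t
  rw [← hf, ← hg, ← integral_indicator_one hst,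
    ← integral_congr_ae (Filter.Eventually.of_forall joint)]
  refine integral_sub_const_mul_sub_const hfi hgi ?_ _ _
  simp_rw [joint]
  exact (integrable_const 1).indicator hst

lemma integral_signedStep_fst_mul_signedStep_snd_le [IsProbabilityMeasure ρ]
    [IsProbabilityMeasure ρ'] (h₁ : ρ.map Prod.fst = ρ'.map Prod.fst)
    (h₀ : ρ.map Prod.snd = ρ'.map Prod.snd) {s t : ℝ}
    (h : ρ (Ioi s ×ˢ Ioi t) ≤ ρ' (Ioi s ×ˢ Ioi t)) :
    ∫ p, signedStep p.1 s * signedStep p.2 t ∂ρ ≤ ∫ p, signedStep p.1 s * signedStep p.2 t ∂ρ' := by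
  rw [integral_signedStep_fst_mul_signedStep_snd, integral_signedStep_fst_mul_signedStep_snd,
    h₁, h₀]
  gcongr
  exact ENNReal.toReal_mono (measure_ne_top _ _) h

theorem integral_fst_mul_snd_le_of_measure_Ioi_prod_Ioi_le [IsProbabilityMeasure ρ]
    [IsProbabilityMeasure ρ'] (h₁ : ρ.map Prod.fst = ρ'.map Prod.fst)
    (h₀ : ρ.map Prod.snd = ρ'.map Prod.snd) (hρ : Integrable (fun p : ℝ × ℝ => p.1 * p.2) ρ)
    (hρ' : Integrable (fun p : ℝ × ℝ => p.1 * p.2) ρ')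
    (h : ∀ s t, ρ (Ioi s ×ˢ Ioi t) ≤ ρ' (Ioi s ×ˢ Ioi t)) :
    ∫ p, p.1 * p.2 ∂ρ ≤ ∫ p, p.1 * p.2 ∂ρ' := by
  rw [integral_fst_mul_snd_eq_integral_integral_signedStep hρ,
    integral_fst_mul_snd_eq_integral_integral_signedStep hρ']
  exact integral_mono (integrable_signedStep_mul_signedStep_prod hρ).integral_prod_right
    (integrable_signedStep_mul_signedStep_prod hρ').integral_prod_right
    fun q => integral_signedStep_fst_mul_signedStep_snd_le h₁ h₀ (h q.1 q.2)

end CrossMoment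

lemma integrable_fst_mul_snd {ρ : Measure (ℝ × ℝ)}
    (h₁ : Integrable (fun x : ℝ => x ^ 2) (ρ.map Prod.fst))
    (h₀ : Integrable (fun y : ℝ => y ^ 2) (ρ.map Prod.snd)) :
    Integrable (fun p : ℝ × ℝ => p.1 * p.2) ρ := by
  have m₁ : MemLp Prod.fst 2 ρ := (memLp_map_measure_iff aestronglyMeasurable_id
    measurable_fst.aemeasurable).1 ((memLp_two_iff_integrable_sq aestronglyMeasurable_id).2 h₁)
  have m₀ : MemLp Prod.snd 2 ρ := (memLp_map_measure_iff aestronglyMeasurable_id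
    measurable_snd.aemeasurable).1 ((memLp_two_iff_integrable_sq aestronglyMeasurable_id).2 h₀)
  exact m₁.integrable_mul m₀

namespace ProbabilityTheory

/-- Only meaningful for `u ∈ (0, 1)`: otherwise the set is empty or unbounded below and `sInf`
returns `0`. -/
noncomputable def quantile (ν : Measure ℝ) (u : ℝ) : ℝ := sInf {y | u ≤ cdf ν y}

section Quantile

variable {ν : Measure ℝ} {u : ℝ}

lemma quantile_le_iff (hu : u ∈ Ioo 0 1) (s : ℝ) : quantile ν u ≤ s ↔ u ≤ cdf ν s := by
  have hne : {y | u ≤ cdf ν y}.Nonempty :=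
    ((tendsto_cdf_atTop ν).eventually_const_le hu.2).exists
  have hbdd : BddBelow {y | u ≤ cdf ν y} := by
    obtain ⟨y₀, hy₀⟩ := ((tendsto_cdf_atBot ν).eventually_lt_const hu.1).exists
    exact ⟨y₀, fun y hy => le_of_not_gt fun hlt => (hy.trans (monotone_cdf ν hlt.le)).not_gt hy₀⟩
  refine ⟨fun h => ?_, fun h => csInf_le hbdd h⟩
  have hmem : u ≤ cdf ν (quantile ν u) := by
    rw [← (cdf ν).iInf_Ioi_eq]
    refine le_ciInf fun ⟨r, hr⟩ => ?_
    obtain ⟨z, hz, hzr⟩ := (csInf_lt_iff hbdd hne).1 hr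
    exact hz.trans (monotone_cdf ν hzr.le)
  exact hmem.trans (monotone_cdf ν h)

lemma lt_quantile_iff (hu : u ∈ Ioo 0 1) (s : ℝ) : s < quantile ν u ↔ cdf ν s < u := by
  simpa only [not_le] using (quantile_le_iff hu s).not

lemma monotoneOn_quantile : MonotoneOn (quantile ν) (Ioo 0 1) := fun _ hu _ hv huv =>
  (quantile_le_iff hu _).2 (huv.trans ((quantile_le_iff hv _).1 le_rfl))

lemma aemeasurable_quantile : AEMeasurable (quantile ν) (volume.restrict (Ioo 0 1)) :=
  aemeasurable_restrict_of_monotoneOn measurableSet_Ioo monotoneOn_quantile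

lemma preimage_quantile_Ioi_inter_Ioo (s : ℝ) :
    quantile ν ⁻¹' Ioi s ∩ Ioo 0 1 = Ioo (cdf ν s) 1 := by
  ext u
  refine ⟨fun ⟨h, hu⟩ => ⟨(lt_quantile_iff hu s).1 h, hu.2⟩, fun ⟨h, h1⟩ => ?_⟩
  have hu : u ∈ Ioo 0 1 := ⟨(cdf_nonneg ν s).trans_lt h, h1⟩
  exact ⟨(lt_quantile_iff hu s).2 h, hu⟩

lemma measure_Ioi_eq_ofReal_one_sub_cdf [IsProbabilityMeasure ν] (s : ℝ) :
    ν (Ioi s) = ENNReal.ofReal (1 - cdf ν s) := by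
  rw [← compl_Iic, prob_compl_eq_one_sub measurableSet_Iic, ← ofReal_cdf,
    ENNReal.ofReal_sub _ (cdf_nonneg ν s), ENNReal.ofReal_one]

instance : IsProbabilityMeasure (volume.restrict (Ioo (0 : ℝ) 1)) :=
  ⟨by simp [Real.volume_Ioo]⟩

lemma map_quantile [IsProbabilityMeasure ν] :
    (volume.restrict (Ioo 0 1)).map (quantile ν) = ν := by
  have : IsProbabilityMeasure ((volume.restrict (Ioo (0 : ℝ) 1)).map (quantile ν)) :=
    Measure.isProbabilityMeasure_map aemeasurable_quantile
  refine Measure.ext_of_Iic _ _ fun s => ?_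
  rw [← compl_Ioi, prob_compl_eq_one_sub measurableSet_Ioi,
    prob_compl_eq_one_sub measurableSet_Ioi,
    Measure.map_apply_of_aemeasurable aemeasurable_quantile measurableSet_Ioi,
    Measure.restrict_apply' measurableSet_Ioo, preimage_quantile_Ioi_inter_Ioo, Real.volume_Ioo,
    measure_Ioi_eq_ofReal_one_sub_cdf]

end Quantile

noncomputable def comonotoneCoupling (ν₁ ν₀ : Measure ℝ) : Measure (ℝ × ℝ) :=
  (volume.restrict (Ioo 0 1)).map fun u => (quantile ν₁ u, quantile ν₀ u)

section ComonotoneCoupling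

variable (ν₁ ν₀ : Measure ℝ)

lemma aemeasurable_quantile_prod :
    AEMeasurable (fun u => (quantile ν₁ u, quantile ν₀ u)) (volume.restrict (Ioo 0 1)) :=
  aemeasurable_quantile.prodMk aemeasurable_quantile

instance : IsProbabilityMeasure (comonotoneCoupling ν₁ ν₀) :=
  Measure.isProbabilityMeasure_map (aemeasurable_quantile_prod ν₁ ν₀)

lemma comonotoneCoupling_map_fst [IsProbabilityMeasure ν₁] :
    (comonotoneCoupling ν₁ ν₀).map Prod.fst = ν₁ := by
  rw [comonotoneCoupling, AEMeasurable.map_map_of_aemeasurable measurable_fst.aemeasurable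
    (aemeasurable_quantile_prod ν₁ ν₀)]
  exact map_quantile

lemma comonotoneCoupling_map_snd [IsProbabilityMeasure ν₀] :
    (comonotoneCoupling ν₁ ν₀).map Prod.snd = ν₀ := by
  rw [comonotoneCoupling, AEMeasurable.map_map_of_aemeasurable measurable_snd.aemeasurable
    (aemeasurable_quantile_prod ν₁ ν₀)]
  exact map_quantile

lemma comonotoneCoupling_Ioi_prod_Ioi [IsProbabilityMeasure ν₁] [IsProbabilityMeasure ν₀]
    (s t : ℝ) : comonotoneCoupling ν₁ ν₀ (Ioi s ×ˢ Ioi t) = min (ν₁ (Ioi s)) (ν₀ (Ioi t)) := by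
  rw [comonotoneCoupling, Measure.map_apply_of_aemeasurable (aemeasurable_quantile_prod ν₁ ν₀)
    (measurableSet_Ioi.prod measurableSet_Ioi), Measure.restrict_apply' measurableSet_Ioo,
    mk_preimage_prod, inter_inter_distrib_right, preimage_quantile_Ioi_inter_Ioo,
    preimage_quantile_Ioi_inter_Ioo, Ioo_inter_Ioo, Real.volume_Ioo,
    measure_Ioi_eq_ofReal_one_sub_cdf, measure_Ioi_eq_ofReal_one_sub_cdf, ← ENNReal.ofReal_min,
    min_self, min_sub_sub_left]

lemma measure_Ioi_prod_Ioi_le_comonotoneCoupling (ρ : Measure (ℝ × ℝ)) [IsProbabilityMeasure ρ]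
    (s t : ℝ) :
    ρ (Ioi s ×ˢ Ioi t) ≤
      comonotoneCoupling (ρ.map Prod.fst) (ρ.map Prod.snd) (Ioi s ×ˢ Ioi t) := by
  have := Measure.isProbabilityMeasure_map (μ := ρ) measurable_fst.aemeasurable
  have := Measure.isProbabilityMeasure_map (μ := ρ) measurable_snd.aemeasurable
  rw [comonotoneCoupling_Ioi_prod_Ioi, Measure.map_apply measurable_fst measurableSet_Ioi,
    Measure.map_apply measurable_snd measurableSet_Ioi]
  exact le_min (measure_mono fun p hp => hp.1) (measure_mono fun p hp => hp.2)

lemma integral_fst_mul_snd_comonotoneCoupling :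
    ∫ p, p.1 * p.2 ∂comonotoneCoupling ν₁ ν₀ =
      ∫ u in (0 : ℝ)..1, quantile ν₁ u * quantile ν₀ u := by
  rw [comonotoneCoupling, integral_map (aemeasurable_quantile_prod ν₁ ν₀) (by fun_prop),
    intervalIntegral.integral_of_le zero_le_one, integral_Ioc_eq_integral_Ioo]

end ComonotoneCoupling

end ProbabilityTheory

open ProbabilityTheory in
/-- **Hoeffding's upper bound on the cross-moment.** If `μ` is a probability measure on `ℝ²`
whose marginals `ν₁, ν₀` (with CDFs `G, F` and quantile functions `Ginv, Finv`) have finite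
second moments, then `x*y` is `μ`-integrable and
`∫ x*y ∂μ ≤ ∫ u in (0,1), Ginv u * Finv u` (the comonotonic cross-moment). -/
theorem stmt_3 (μ : Measure (ℝ × ℝ)) [IsProbabilityMeasure μ]
    (ν₁ ν₀ : Measure ℝ) (hν₁ : ν₁ = μ.map Prod.fst) (hν₀ : ν₀ = μ.map Prod.snd)
    (hsq₁ : Integrable (fun x : ℝ => x ^ 2) ν₁)
    (hsq₀ : Integrable (fun y : ℝ => y ^ 2) ν₀)
    (G F : ℝ → ℝ) (hG : ∀ t, G t = (ν₁ (Set.Iic t)).toReal)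
    (hF : ∀ t, F t = (ν₀ (Set.Iic t)).toReal)
    (Ginv Finv : ℝ → ℝ) (hGinv : ∀ u, Ginv u = sInf {y : ℝ | u ≤ G y})
    (hFinv : ∀ u, Finv u = sInf {y : ℝ | u ≤ F y}) :
    Integrable (fun p : ℝ × ℝ => p.1 * p.2) μ ∧
      ∫ p : ℝ × ℝ, p.1 * p.2 ∂μ ≤ ∫ u in (0:ℝ)..1, Ginv u * Finv u := by
  subst hν₁ hν₀
  have := Measure.isProbabilityMeasure_map (μ := μ) measurable_fst.aemeasurable
  have := Measure.isProbabilityMeasure_map (μ := μ) measurable_snd.aemeasurable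
  obtain rfl : G = cdf (μ.map Prod.fst) :=
    funext fun t => by rw [hG, cdf_eq_real, measureReal_def]
  obtain rfl : F = cdf (μ.map Prod.snd) :=
    funext fun t => by rw [hF, cdf_eq_real, measureReal_def]
  obtain rfl : Ginv = quantile (μ.map Prod.fst) := funext hGinv
  obtain rfl : Finv = quantile (μ.map Prod.snd) := funext hFinv
  have hμ := integrable_fst_mul_snd hsq₁ hsq₀
  refine ⟨hμ, ?_⟩
  rw [← integral_fst_mul_snd_comonotoneCoupling]
  have h₁ := comonotoneCoupling_map_fst (μ.map Prod.fst) (μ.map Prod.snd)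
  have h₀ := comonotoneCoupling_map_snd (μ.map Prod.fst) (μ.map Prod.snd)
  exact integral_fst_mul_snd_le_of_measure_Ioi_prod_Ioi_le h₁.symm h₀.symm hμ
    (integrable_fst_mul_snd (by rwa [h₁]) (by rwa [h₀]))
    (measure_Ioi_prod_Ioi_le_comonotoneCoupling μ)
end

section
/- Let N ≥ 2 and let Y(1), Y(0) : Fin N → ℝ be the potential outcomes of a finite population. Let 1 ≤ n₁ ≤ N − 1, n₀ = N − n₁, and let Z = (Z₁,…,Z_N) be uniformly distributed over all vectors in {0,1}^N with exactly n₁ ones (a completely randomized experiment). Define the difference-in-means estimator τ̂ = (1/n₁) ∑_i Z_i Y_i(1) − (1/n₀) ∑_i (1 − Z_i) Y_i(0). Then Var(τ̂) = (1/N) [ (n₀/n₁) S²(Y(1)) + (n₁/n₀) S²(Y(0)) + 2 S(Y(1),Y(0)) ], where S²(Y(q)) = (1/(N−1)) ∑_i (Y_i(q) − Ȳ(q))², S(Y(1),Y(0)) = (1/(N−1)) ∑_i (Y_i(1) − Ȳ(1))(Y_i(0) − Ȳ(0)), and Ȳ(q) = (1/N) ∑_i Y_i(q). -/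
/-!
With `aᵢ = Yᵢ(1)/n₁ + Yᵢ(0)/n₀` the estimator is `τ̂ = ∑_{i ∈ S} aᵢ - ∑ᵢ Yᵢ(0)/n₀`, where `S` is
the treated set, so `Var τ̂` is the variance of the total of a simple random sample of size `n₁`
drawn without replacement. Since `P(i ∈ S) = n₁/N` and `P(i, j ∈ S) = n₁(n₁-1)/(N(N-1))` for
`i ≠ j`, that variance is `n₁n₀/N · S²(a)`, and expanding `S²(a)` bilinearly gives
`S²(Y(1))/n₁² + 2 S(Y(1),Y(0))/(n₁n₀) + S²(Y(0))/n₀²`.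
-/

open Finset

/-- Expectation of a real-valued function of a completely randomized treatment assignment:
the assignment is uniformly distributed over all subsets of `Fin N` of size `n`, so the
expectation is the average over all such subsets. -/
noncomputable def expectCRE {N n : ℕ} (f : {S : Finset (Fin N) // S.card = n} → ℝ) : ℝ :=
  (∑ ω : {S : Finset (Fin N) // S.card = n}, f ω)
    / (Fintype.card {S : Finset (Fin N) // S.card = n} : ℝ)

open scoped BigOperators

theorem Nat.choose_sub_mul_descFactorial {m n k : ℕ} (hkn : k ≤ n) :
    (m - k).choose (n - k) * m.descFactorial k = m.choose n * n.descFactorial k := by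
  rw [Nat.descFactorial_eq_factorial_mul_choose, Nat.descFactorial_eq_factorial_mul_choose,
    mul_left_comm, mul_left_comm (m.choose n), Nat.choose_mul hkn, mul_comm (m.choose k)]

theorem Finset.expect_sq_sub_expect {ι : Type*} {s : Finset ι} (hs : s.Nonempty) (f : ι → ℝ) :
    𝔼 i ∈ s, (f i - 𝔼 j ∈ s, f j) ^ 2 = 𝔼 i ∈ s, f i ^ 2 - (𝔼 i ∈ s, f i) ^ 2 := by
  simp_rw [sub_sq, expect_add_distrib, expect_sub_distrib, mul_assoc, ← mul_expect, ← expect_mul,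
    expect_const hs]
  ring

theorem Finset.sum_eq_sum_mul_singleton_subset {ι R : Type*} [Fintype ι] [DecidableEq ι]
    [CommSemiring R] (S : Finset ι) (a : ι → R) :
    ∑ i ∈ S, a i = ∑ i, a i * if {i} ⊆ S then 1 else 0 := by
  simp [sum_ite_mem]

theorem Finset.sq_sum_eq_sum_sum_mul_pair_subset {ι R : Type*} [Fintype ι] [DecidableEq ι]
    [CommSemiring R] (S : Finset ι) (a : ι → R) :
    (∑ i ∈ S, a i) ^ 2 = ∑ i, ∑ j, a i * a j * if {i, j} ⊆ S then 1 else 0 := by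
  simp [sq, sum_mul_sum, insert_subset_iff, ite_and, sum_ite_mem]

variable {N n : ℕ}

theorem expectCRE_eq_expect (f : {S : Finset (Fin N) // S.card = n} → ℝ) :
    expectCRE f = 𝔼 ω, f ω :=
  (Fintype.expect_eq_sum_div_card f).symm

theorem nonempty_subtype_card_eq (hn : n ≤ N) : Nonempty {S : Finset (Fin N) // S.card = n} := by
  simpa [← Fintype.card_pos_iff] using Nat.choose_pos hn

theorem expectCRE_add_const (hn : n ≤ N) (f : {S : Finset (Fin N) // S.card = n} → ℝ) (c : ℝ) :
    expectCRE (fun ω => f ω + c) = expectCRE f + c := by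
  have := nonempty_subtype_card_eq hn
  simp only [expectCRE_eq_expect, expect_add_distrib, Fintype.expect_const]

theorem expectCRE_sq_sub_expectCRE (hn : n ≤ N) (f : {S : Finset (Fin N) // S.card = n} → ℝ) :
    expectCRE (fun ω => (f ω - expectCRE f) ^ 2)
      = expectCRE (fun ω => f ω ^ 2) - expectCRE f ^ 2 := by
  have := nonempty_subtype_card_eq hn
  simp only [expectCRE_eq_expect]
  exact expect_sq_sub_expect univ_nonempty f

theorem expectCRE_ite_subset (hn : n ≤ N) (A : Finset (Fin N)) :
    expectCRE (n := n) (fun ω => if A ⊆ ω.1 then 1 else 0)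
      = (n.descFactorial #A : ℝ) / N.descFactorial #A := by
  have hAN : #A ≤ N := by simpa using card_le_univ A
  rw [expectCRE, Fintype.card_finset_len, Fintype.card_fin,
    ← sum_subtype _ (fun S => mem_powersetCard_univ) (fun S => if A ⊆ S then (1 : ℝ) else 0),
    sum_boole]
  obtain hAn | hnA := le_or_gt #A n
  · rw [card_filter_powersetCard_subset _ _ _ (subset_univ A) hAn, card_univ, Fintype.card_fin,
      div_eq_div_iff (by exact_mod_cast (Nat.choose_pos hn).ne') (by simpa using hAN),
      mul_comm (n.descFactorial _ : ℝ)]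
    exact_mod_cast Nat.choose_sub_mul_descFactorial hAn
  · have hempty : {S ∈ (univ : Finset (Fin N)).powersetCard n | A ⊆ S} = ∅ :=
      filter_false_of_mem fun S hS hAS => by
        have := card_le_card hAS; rw [(mem_powersetCard.1 hS).2] at this; omega
    simp [hempty, Nat.descFactorial_eq_zero_iff_lt.2 hnA]

theorem expectCRE_ite_pair_subset (hn : n ≤ N) (i j : Fin N) :
    expectCRE (n := n) (fun ω => if {i, j} ⊆ ω.1 then 1 else 0)
      = if i = j then (n : ℝ) / N else n * (n - 1) / (N * (N - 1)) := by
  rw [expectCRE_ite_subset hn]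
  split_ifs with hij
  · simp [hij]
  · rw [card_pair hij, Nat.cast_descFactorial_two, Nat.cast_descFactorial_two]

theorem expectCRE_sum_mem (hn : n ≤ N) (a : Fin N → ℝ) :
    expectCRE (n := n) (fun ω => ∑ i ∈ ω.1, a i) = n / N * ∑ i, a i := by
  conv_lhs => enter [1, ω]; rw [sum_eq_sum_mul_singleton_subset]
  simp_rw [expectCRE_eq_expect, expect_sum_comm, ← mul_expect,
    ← expectCRE_eq_expect, expectCRE_ite_subset hn, card_singleton, Nat.descFactorial_one, mul_sum,
    mul_comm]

theorem expectCRE_sq_sum_mem (hn : n ≤ N) (a : Fin N → ℝ) :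
    expectCRE (n := n) (fun ω => (∑ i ∈ ω.1, a i) ^ 2)
      = n * (n - 1) / (N * (N - 1)) * (∑ i, a i) ^ 2
        + (n / N - n * (n - 1) / (N * (N - 1))) * ∑ i, a i ^ 2 := by
  set p₂ : ℝ := n * (n - 1) / (N * (N - 1))
  -- `P(i, j ∈ S) = p₂ + [i = j] (n/N - p₂)` splits the double sum into `(∑ a)²` and `∑ a²`.
  have hpair : ∀ i j : Fin N, expectCRE (n := n) (fun ω => if {i, j} ⊆ ω.1 then 1 else 0)
      = p₂ + if i = j then n / N - p₂ else 0 := by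
    intro i j
    rw [expectCRE_ite_pair_subset hn]
    split_ifs <;> ring
  conv_lhs => enter [1, ω]; rw [sq_sum_eq_sum_sum_mul_pair_subset]
  simp_rw [expectCRE_eq_expect, expect_sum_comm, ← mul_expect,
    ← expectCRE_eq_expect, hpair, mul_add, sum_add_distrib, mul_ite, mul_zero, sum_ite_eq,
    mem_univ, if_true, ← sum_mul, ← mul_sum, ← sum_mul, sq]
  ring

noncomputable def popMean (y : Fin N → ℝ) : ℝ := (∑ i, y i) / N

noncomputable def popVar (y : Fin N → ℝ) : ℝ := (∑ i, (y i - popMean y) ^ 2) / (N - 1)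

noncomputable def popCov (x y : Fin N → ℝ) : ℝ :=
  (∑ i, (x i - popMean x) * (y i - popMean y)) / (N - 1)

theorem popVar_eq (y : Fin N → ℝ) :
    popVar y = (∑ i, y i ^ 2 - (∑ i, y i) ^ 2 / N) / (N - 1) := by
  rcases N.eq_zero_or_pos with rfl | hN
  · simp [popVar]
  have hN' : (N : ℝ) ≠ 0 := by positivity
  simp only [popVar, popMean, sub_sq, sum_add_distrib, sum_sub_distrib, ← sum_mul, ← mul_sum,
    sum_const, card_univ, Fintype.card_fin, nsmul_eq_mul]
  field_simp
  ring

theorem popMean_mul_add_mul (α β : ℝ) (x y : Fin N → ℝ) :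
    popMean (fun i => α * x i + β * y i) = α * popMean x + β * popMean y := by
  simp only [popMean, sum_add_distrib, ← mul_sum]
  ring

theorem popVar_mul_add_mul (α β : ℝ) (x y : Fin N → ℝ) :
    popVar (fun i => α * x i + β * y i)
      = α ^ 2 * popVar x + 2 * α * β * popCov x y + β ^ 2 * popVar y := by
  have hcentre : ∀ i, α * x i + β * y i - (α * popMean x + β * popMean y)
      = α * (x i - popMean x) + β * (y i - popMean y) := fun i => by ring
  simp only [popVar, popCov, popMean_mul_add_mul, hcentre, mul_div_assoc', ← add_div, mul_sum,
    ← sum_add_distrib]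
  congr 1
  exact sum_congr rfl fun i _ => by ring

theorem expectCRE_variance_sum_mem (hN : 2 ≤ N) (hn : n ≤ N) (a : Fin N → ℝ) :
    expectCRE (n := n)
        (fun ω => (∑ i ∈ ω.1, a i - expectCRE (n := n) (fun ω => ∑ i ∈ ω.1, a i)) ^ 2)
      = n * (N - n) / N * popVar a := by
  have hN₀ : (N : ℝ) ≠ 0 := by positivity
  have hN₁ : (N : ℝ) - 1 ≠ 0 := by
    have : (2 : ℝ) ≤ N := by exact_mod_cast hN
    linarith
  rw [expectCRE_sq_sub_expectCRE hn, expectCRE_sq_sum_mem hn, expectCRE_sum_mem hn, popVar_eq]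
  field_simp
  ring

/-- **Neyman's variance formula.** In a completely randomized experiment with `n₁` treated
units out of `N`, the variance of the difference-in-means estimator is
`(1/N) ((n₀/n₁) S²(Y(1)) + (n₁/n₀) S²(Y(0)) + 2 S(Y(1),Y(0)))`. -/
theorem stmt_5 (N : ℕ) (hN : 2 ≤ N) (Y1 Y0 : Fin N → ℝ)
    (n1 n0 : ℕ) (hn1 : 1 ≤ n1) (hn1' : n1 ≤ N - 1) (hn0 : n0 = N - n1)
    (Z : Fin N → {S : Finset (Fin N) // S.card = n1} → ℝ)
    (hZ : ∀ i ω, Z i ω = if i ∈ ω.1 then 1 else 0)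
    (τhat : {S : Finset (Fin N) // S.card = n1} → ℝ)
    (hτ : ∀ ω, τhat ω = (∑ i, Z i ω * Y1 i) / (n1 : ℝ)
        - (∑ i, (1 - Z i ω) * Y0 i) / (n0 : ℝ))
    (Ybar1 Ybar0 S2Y1 S2Y0 S10 : ℝ)
    (hY1 : Ybar1 = (∑ i, Y1 i) / (N : ℝ)) (hY0 : Ybar0 = (∑ i, Y0 i) / (N : ℝ))
    (hS1 : S2Y1 = (∑ i, (Y1 i - Ybar1) ^ 2) / ((N : ℝ) - 1))
    (hS0 : S2Y0 = (∑ i, (Y0 i - Ybar0) ^ 2) / ((N : ℝ) - 1))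
    (hS10 : S10 = (∑ i, (Y1 i - Ybar1) * (Y0 i - Ybar0)) / ((N : ℝ) - 1)) :
    expectCRE (fun ω => (τhat ω - expectCRE τhat) ^ 2)
      = (1 / (N : ℝ)) * (((n0 : ℝ) / (n1 : ℝ)) * S2Y1 + ((n1 : ℝ) / (n0 : ℝ)) * S2Y0
          + 2 * S10) := by
  have hn1N : n1 ≤ N := by omega
  have hn1R : (n1 : ℝ) ≠ 0 := by positivity
  have hn0R : (n0 : ℝ) = N - n1 := by rw [hn0, Nat.cast_sub hn1N]
  have hNn1 : (N : ℝ) - n1 ≠ 0 := by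
    rw [← hn0R]; exact_mod_cast (by omega : n0 ≠ 0)
  have hZsum : ∀ ω (y : Fin N → ℝ), ∑ i, Z i ω * y i = ∑ i ∈ ω.1, y i := fun ω y => by
    simp [hZ, sum_ite_mem]
  have hτsum : τhat = fun ω => ∑ i ∈ ω.1, ((n1 : ℝ)⁻¹ * Y1 i + (n0 : ℝ)⁻¹ * Y0 i)
      + -((∑ i, Y0 i) / n0) := by
    funext ω
    simp only [hτ, sub_mul, one_mul, sum_sub_distrib, hZsum, sum_add_distrib, ← mul_sum]
    ring
  have hS : S2Y1 = popVar Y1 ∧ S2Y0 = popVar Y0 ∧ S10 = popCov Y1 Y0 := by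
    subst hY1 hY0 hS1 hS0 hS10
    exact ⟨rfl, rfl, rfl⟩
  obtain ⟨rfl, rfl, rfl⟩ := hS
  simp_rw [hτsum, expectCRE_add_const hn1N, add_sub_add_right_eq_sub]
  rw [expectCRE_variance_sum_mem hN hn1N, popVar_mul_add_mul, hn0R]
  field_simp
  ring
end

section
/- Let N ≥ 2, let y : Fin N → ℝ be a finite population, and let 2 ≤ n ≤ N. Let Z be uniformly distributed over all vectors in {0,1}^N with exactly n ones (a simple random sample of size n drawn without replacement). Then E[ (1/(n−1)) ∑_i Z_i (y_i − ȳ^S)² ] = (1/(N−1)) ∑_i (y_i − ȳ)², where ȳ^S = (1/n) ∑_i Z_i y_i is the sample mean and ȳ = (1/N) ∑_i y_i is the population mean. That is, the sample variance with divisor n − 1 is an unbiased estimator of the finite-population variance with divisor N − 1 under simple random sampling without replacement. -/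
/-!
Both variances are averages of squared pairwise differences:
`∑ i ∈ s, (f i - mean_s f)² = (∑ i ∈ s, ∑ j ∈ s, (f i - f j)²) / (2 #s)`.
Summing the sample version over all `n`-subsets, an ordered pair `i ≠ j` is counted in
exactly `C(N-2, n-2)` subsets (and diagonal pairs contribute nothing), so the expected sample
variance is `C(N-2, n-2) / (C(N, n) · 2n(n-1))` times the full double sum; the identity
`C(N, n) · n(n-1) = N(N-1) · C(N-2, n-2)` turns this into the population variance.
-/

open Finset

/-- Expectation of a real-valued function of a simple random sample without replacement:
the sample is uniformly distributed over all subsets of `Fin N` of size `n`, so the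
expectation is the average over all such subsets. -/
noncomputable def expectSRS {N n : ℕ} (f : {S : Finset (Fin N) // S.card = n} → ℝ) : ℝ :=
  (∑ ω : {S : Finset (Fin N) // S.card = n}, f ω)
    / (Fintype.card {S : Finset (Fin N) // S.card = n} : ℝ)

theorem Finset.sum_sq_sub_mean_eq_sum_sum_sq_sub_div {ι K : Type*} [Field K] [CharZero K]
    (s : Finset ι) (f : ι → K) :
    ∑ i ∈ s, (f i - (∑ j ∈ s, f j) / #s) ^ 2
      = (∑ i ∈ s, ∑ j ∈ s, (f i - f j) ^ 2) / (2 * #s) := by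
  rcases s.eq_empty_or_nonempty with rfl | hs
  · simp
  have hcard : (#s : K) ≠ 0 := by exact_mod_cast hs.card_pos.ne'
  simp only [sub_sq, sum_add_distrib, sum_sub_distrib, sum_const, nsmul_eq_mul, ← mul_sum,
    ← sum_mul, div_pow]
  field_simp
  ring

theorem Finset.sum_powersetCard_sum_sum_eq_choose_smul {ι M : Type*} [DecidableEq ι]
    [AddCommMonoid M] (s : Finset ι) {n : ℕ} (hn : 2 ≤ n) (g : ι → ι → M)
    (hg : ∀ i, g i i = 0) :
    ∑ S ∈ s.powersetCard n, ∑ i ∈ S, ∑ j ∈ S, g i j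
      = (#s - 2).choose (n - 2) • ∑ i ∈ s, ∑ j ∈ s, g i j := by
  have hpair : ∀ S ∈ s.powersetCard n, ∑ i ∈ S, ∑ j ∈ S, g i j
      = ∑ i ∈ s, ∑ j ∈ s, if {i, j} ⊆ S then g i j else 0 := by
    intro S hS
    have hS : ∀ f : ι → M, ∑ i ∈ S, f i = ∑ i ∈ s, if i ∈ S then f i else 0 := fun f => by
      rw [sum_ite_mem, inter_eq_right.2 (mem_powersetCard.1 hS).1]
    simp [hS, insert_subset_iff, ite_and]
  rw [sum_congr rfl hpair, sum_comm, smul_sum]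
  refine sum_congr rfl fun i hi => ?_
  rw [sum_comm, smul_sum]
  refine sum_congr rfl fun j hj => ?_
  rw [← sum_filter, sum_const]
  obtain rfl | hij := eq_or_ne i j
  · simp [hg]
  · rw [card_filter_powersetCard_subset _ _ _ (by simp [insert_subset_iff, hi, hj])
      (by rw [card_pair hij]; exact hn), card_pair hij]

theorem expectSRS_eq_sum_powersetCard_div {N n : ℕ} (F : Finset (Fin N) → ℝ) :
    expectSRS (fun ω : {S : Finset (Fin N) // #S = n} => F ω.1)
      = (∑ S ∈ powersetCard n univ, F S) / N.choose n := by
  rw [expectSRS, Fintype.card_finset_len, Fintype.card_fin,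
    sum_subtype _ (fun S => mem_powersetCard_univ)]

theorem Nat.cast_choose_mul_mul_sub_one {K : Type*} [Field K] [CharZero K] {N n : ℕ}
    (hn : 2 ≤ n) :
    (N.choose n : K) * (n * (n - 1)) = N * (N - 1) * (N - 2).choose (n - 2) := by
  have h := congrArg (fun m : ℕ => (m : K)) (Nat.choose_mul (n := N) hn)
  simp only [Nat.cast_mul, Nat.cast_choose_two] at h
  linear_combination 2 * h

theorem stmt_7_general (N : ℕ) (y : Fin N → ℝ)
    (n : ℕ) (hn : 2 ≤ n) (hn' : n ≤ N)
    (Z : Fin N → {S : Finset (Fin N) // S.card = n} → ℝ)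
    (hZ : ∀ i ω, Z i ω = if i ∈ ω.1 then 1 else 0)
    (ybarS : {S : Finset (Fin N) // S.card = n} → ℝ)
    (hybarS : ∀ ω, ybarS ω = (∑ i, Z i ω * y i) / (n : ℝ))
    (ybar : ℝ) (hybar : ybar = (∑ i, y i) / (N : ℝ)) :
    expectSRS (fun ω => (∑ i, Z i ω * (y i - ybarS ω) ^ 2) / ((n : ℝ) - 1))
      = (∑ i, (y i - ybar) ^ 2) / ((N : ℝ) - 1) := by
  classical
  have hZ_sum (ω : {S : Finset (Fin N) // #S = n}) (f : Fin N → ℝ) :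
      ∑ i, Z i ω * f i = ∑ i ∈ ω.1, f i := by
    simp only [hZ, ite_mul, one_mul, zero_mul, Fintype.sum_ite_mem]
  have hsample (ω : {S : Finset (Fin N) // #S = n}) :
      (∑ i, Z i ω * (y i - ybarS ω) ^ 2) / ((n : ℝ) - 1)
        = (∑ i ∈ ω.1, ∑ j ∈ ω.1, (y i - y j) ^ 2) / (2 * n * (n - 1)) := by
    have hvar := sum_sq_sub_mean_eq_sum_sum_sq_sub_div ω.1 y
    rw [ω.2] at hvar
    rw [hZ_sum, hybarS, hZ_sum, hvar, div_div]
  have hpop : ∑ i, (y i - ybar) ^ 2 = (∑ i, ∑ j, (y i - y j) ^ 2) / (2 * N) := by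
    simpa [hybar] using sum_sq_sub_mean_eq_sum_sum_sq_sub_div univ y
  have hchoose := Nat.cast_choose_mul_mul_sub_one (K := ℝ) (N := N) hn
  have hC : (N.choose n : ℝ) ≠ 0 := by exact_mod_cast (Nat.choose_pos hn').ne'
  have hn2 : (2 : ℝ) ≤ n := by exact_mod_cast hn
  have hN2 : (2 : ℝ) ≤ N := by exact_mod_cast hn.trans hn'
  have hn1 : (n : ℝ) - 1 ≠ 0 := by linarith
  have hN1 : (N : ℝ) - 1 ≠ 0 := by linarith
  simp_rw [hsample]
  rw [expectSRS_eq_sum_powersetCard_div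
      (fun S => (∑ i ∈ S, ∑ j ∈ S, (y i - y j) ^ 2) / (2 * n * (n - 1))),
    ← sum_div, sum_powersetCard_sum_sum_eq_choose_smul _ hn _ (fun i => by simp), hpop,
    card_univ, Fintype.card_fin, nsmul_eq_mul]
  field_simp
  linear_combination -(∑ i, ∑ j, (y i - y j) ^ 2) * hchoose

/-- **Unbiasedness of the sample variance under simple random sampling without
replacement.** For a simple random sample of size `n` (encoded by indicators `Z`) from a
finite population `y` of size `N`, the sample variance with divisor `n - 1` is unbiased for
the finite-population variance with divisor `N - 1`. -/
theorem stmt_7 (N : ℕ) (hN : 2 ≤ N) (y : Fin N → ℝ)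
    (n : ℕ) (hn : 2 ≤ n) (hn' : n ≤ N)
    (Z : Fin N → {S : Finset (Fin N) // S.card = n} → ℝ)
    (hZ : ∀ i ω, Z i ω = if i ∈ ω.1 then 1 else 0)
    (ybarS : {S : Finset (Fin N) // S.card = n} → ℝ)
    (hybarS : ∀ ω, ybarS ω = (∑ i, Z i ω * y i) / (n : ℝ))
    (ybar : ℝ) (hybar : ybar = (∑ i, y i) / (N : ℝ)) :
    expectSRS (fun ω => (∑ i, Z i ω * (y i - ybarS ω) ^ 2) / ((n : ℝ) - 1))
      = (∑ i, (y i - ybar) ^ 2) / ((N : ℝ) - 1) :=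
  stmt_7_general N y n hn hn' Z hZ ybarS hybarS ybar hybar
end

section
/- Let N ≥ 2, 1 ≤ n₁ ≤ N − 1, n₀ = N − n₁, and let Y(1), Y(0) : Fin N → ℝ. Let a₁ ≤ … ≤ a_N be the values Y_i(1) sorted in nondecreasing order and b₁ ≤ … ≤ b_N the values Y_i(0) sorted in nondecreasing order. Define Sᴴ = (1/(N−1))(∑_{i=1}^N a_i b_i − N Ȳ(1) Ȳ(0)) and Sᴸ = (1/(N−1))(∑_{i=1}^N a_i b_{N+1−i} − N Ȳ(1) Ȳ(0)), and set Vᴴ = (1/N)[(n₀/n₁) S²(Y(1)) + (n₁/n₀) S²(Y(0)) + 2 Sᴴ] and Vᴸ = (1/N)[(n₀/n₁) S²(Y(1)) + (n₁/n₀) S²(Y(0)) + 2 Sᴸ]. For a permutation σ of Fin N, let Var_σ denote the variance of the difference-in-means estimator under a completely randomized experiment on the population (Y(1), Y(0)∘σ). Then for every permutation σ, Vᴸ ≤ Var_σ ≤ Vᴴ, and there exist permutations attaining each bound. That is, Vᴴ and Vᴸ are sharp upper and lower bounds for the variance of the difference-in-means estimator among all populations sharing the given marginal multisets of potential outcomes.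 -/
open Finset

/-- The difference-in-means estimator for the population `(Y1, Y0)` in a completely
randomized experiment where the set of treated units is `ω` (of size `n1`). -/
noncomputable def dimEst (N n1 : ℕ) (Y1 Y0 : Fin N → ℝ)
    (ω : {S : Finset (Fin N) // S.card = n1}) : ℝ :=
  (∑ i, if i ∈ ω.1 then Y1 i else 0) / (n1 : ℝ)
    - (∑ i, if i ∈ ω.1 then 0 else Y0 i) / ((N - n1 : ℕ) : ℝ)

/-- The variance of the difference-in-means estimator under a completely randomized
experiment with `n1` treated units, for the population `(Y1, Y0)`. -/
noncomputable def dimVar (N n1 : ℕ) (Y1 Y0 : Fin N → ℝ) : ℝ :=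
  expectCRE (fun ω => (dimEst N n1 Y1 Y0 ω - expectCRE (dimEst N n1 Y1 Y0)) ^ 2)

/-!
The difference-in-means estimator equals `Ȳ(1) - Ȳ(0)` plus the total, over the treated units,
of the deviations `dᵢ = (Yᵢ(1) - Ȳ(1)) / n₁ + (Yᵢ(0) - Ȳ(0)) / n₀`, which sum to zero. Under
complete randomization a unit is treated with probability `n₁ / N` and a pair of distinct units
with probability `n₁ (n₁ - 1) / (N (N - 1))`, so the variance of this total is
`n₁ n₀ / (N (N - 1)) ∑ dᵢ²`, which expands to Neyman's formula. Permuting `Y(0)` changes only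
the cross term `∑ Yᵢ(1) Y_{σ i}(0)`, and the rearrangement inequality bounds it by the
comonotone and countermonotone pairings of the sorted values, both of which are realised by a
permutation.
-/
section Sampling

variable {α : Type*} [Fintype α] [DecidableEq α]

theorem card_filter_superset_powersetCard_mul_descFactorial (s : Finset α) (n : ℕ) :
    #{S ∈ powersetCard n (univ : Finset α) | s ⊆ S} * (Fintype.card α).descFactorial #s
      = (Fintype.card α).choose n * n.descFactorial #s := by
  by_cases hsn : #s ≤ n
  · rw [card_filter_powersetCard_subset s univ n (subset_univ s) hsn, card_univ,
      Nat.descFactorial_eq_factorial_mul_choose, Nat.descFactorial_eq_factorial_mul_choose,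
      mul_left_comm ((Fintype.card α).choose n), Nat.choose_mul hsn]
    ring
  · have hempty : {S ∈ powersetCard n (univ : Finset α) | s ⊆ S} = ∅ :=
      filter_eq_empty_iff.2 fun S hS hsS =>
        hsn ((card_le_card hsS).trans_eq (mem_powersetCard_univ.1 hS))
    rw [hempty, Nat.descFactorial_eq_zero_iff_lt.2 (not_le.1 hsn), card_empty, zero_mul, mul_zero]

theorem card_filter_mem_powersetCard (n : ℕ) (i : α) :
    (#{S ∈ powersetCard n (univ : Finset α) | i ∈ S} : ℝ)
      = (Fintype.card α).choose n * (n / Fintype.card α) := by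
  have h := card_filter_superset_powersetCard_mul_descFactorial {i} n
  simp only [singleton_subset_iff, card_singleton, Nat.descFactorial_one] at h
  have hα : (Fintype.card α : ℝ) ≠ 0 := Nat.cast_ne_zero.2 (Fintype.card_pos_iff.2 ⟨i⟩).ne'
  rw [mul_div_assoc', eq_div_iff hα]
  exact_mod_cast h

theorem card_filter_mem_mem_powersetCard (n : ℕ) {i j : α} (hij : i ≠ j) :
    (#{S ∈ powersetCard n (univ : Finset α) | i ∈ S ∧ j ∈ S} : ℝ)
      = (Fintype.card α).choose n
        * (n * (n - 1) / (Fintype.card α * (Fintype.card α - 1))) := by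
  have h := congrArg (Nat.cast (R := ℝ))
    (card_filter_superset_powersetCard_mul_descFactorial {i, j} n)
  simp only [insert_subset_iff, singleton_subset_iff, card_pair hij] at h
  push_cast [Nat.cast_descFactorial_two] at h
  have hα : (2 : ℝ) ≤ Fintype.card α := by
    exact_mod_cast (card_pair hij).symm.trans_le (card_le_univ {i, j})
  rw [mul_div_assoc', eq_div_iff (by nlinarith)]
  linarith

theorem sum_powersetCard_sum (n : ℕ) (g : α → ℝ) :
    ∑ S ∈ powersetCard n (univ : Finset α), ∑ i ∈ S, g i
      = (Fintype.card α).choose n * (n / Fintype.card α * ∑ i, g i) := by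
  rw [sum_comm' (t' := univ) (s' := fun i => {S ∈ powersetCard n univ | i ∈ S})
    (fun S i => by simp [and_comm])]
  simp only [sum_const, nsmul_eq_mul, card_filter_mem_powersetCard, mul_sum]
  exact sum_congr rfl fun i _ => by ring

theorem sum_powersetCard_sq_sum (n : ℕ) (g : α → ℝ) :
    ∑ S ∈ powersetCard n (univ : Finset α), (∑ i ∈ S, g i) ^ 2
      = (Fintype.card α).choose n
        * (n * (n - 1) / (Fintype.card α * (Fintype.card α - 1)) * (∑ i, g i) ^ 2
          + (n / Fintype.card α - n * (n - 1) / (Fintype.card α * (Fintype.card α - 1)))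
            * ∑ i, g i ^ 2) := by
  set K : ℝ := (((Fintype.card α).choose n : ℕ) : ℝ)
  set p₁ : ℝ := n / Fintype.card α
  set p₂ : ℝ := n * (n - 1) / (Fintype.card α * (Fintype.card α - 1))
  have hcount : ∀ i j : α, (#{S ∈ powersetCard n (univ : Finset α) | i ∈ S ∧ j ∈ S} : ℝ)
      = K * p₂ + if i = j then K * (p₁ - p₂) else 0 := by
    intro i j
    split_ifs with hij
    · subst hij
      simp only [and_self, card_filter_mem_powersetCard]
      ring
    · rw [card_filter_mem_mem_powersetCard n hij, add_zero]
  calc ∑ S ∈ powersetCard n univ, (∑ i ∈ S, g i) ^ 2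
      = ∑ S ∈ powersetCard n univ, ∑ i ∈ S, ∑ j ∈ S, g i * g j := by
        simp only [sq, sum_mul_sum]
    _ = ∑ i, ∑ j, (#{S ∈ powersetCard n (univ : Finset α) | i ∈ S ∧ j ∈ S} : ℝ)
          * (g i * g j) := by
        rw [sum_comm' (t' := univ) (s' := fun i => {S ∈ powersetCard n univ | i ∈ S})
          (fun S i => by simp [and_comm])]
        refine sum_congr rfl fun i _ => ?_
        rw [sum_comm' (t' := univ) (s' := fun j => {S ∈ powersetCard n univ | i ∈ S ∧ j ∈ S})
          (fun S j => by simp [and_assoc])]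
        simp only [sum_const, nsmul_eq_mul]
    _ = ∑ i, ∑ j, K * p₂ * (g i * g j) + ∑ i, K * (p₁ - p₂) * (g i * g i) := by
        simp only [hcount, add_mul, sum_add_distrib, ite_mul, zero_mul, sum_ite_eq, mem_univ,
          if_true]
    _ = K * (p₂ * (∑ i, g i) ^ 2 + (p₁ - p₂) * ∑ i, g i ^ 2) := by
        simp only [← mul_sum, sq, sum_mul_sum]
        ring

end Sampling

theorem expectCRE_eq_sum_powersetCard_div {N n : ℕ} (F : Finset (Fin N) → ℝ) :
    expectCRE (fun ω : {S : Finset (Fin N) // #S = n} => F ω.1)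
      = (∑ S ∈ powersetCard n univ, F S) / N.choose n := by
  rw [expectCRE, Fintype.card_finset_len, Fintype.card_fin,
    sum_subtype _ (fun S => mem_powersetCard_univ) F]

section DifferenceInMeans

variable {N n1 : ℕ} (Y1 Y0 : Fin N → ℝ)

theorem sum_sub_mean_mul_sub_mean (x y : Fin N → ℝ) :
    ∑ i, (x i - (∑ j, x j) / N) * (y i - (∑ j, y j) / N)
      = ∑ i, x i * y i - N * ((∑ j, x j) / N) * ((∑ j, y j) / N) := by
  obtain rfl | hN := eq_or_ne N 0
  · simp
  simp only [sub_mul, mul_sub, sum_sub_distrib, ← sum_mul, ← mul_sum, sum_const, card_univ,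
    Fintype.card_fin, nsmul_eq_mul]
  field_simp
  ring

noncomputable def dimDeviation (N n1 : ℕ) (Y1 Y0 : Fin N → ℝ) (i : Fin N) : ℝ :=
  (Y1 i - (∑ j, Y1 j) / N) / n1 + (Y0 i - (∑ j, Y0 j) / N) / (N - n1 : ℕ)

theorem sum_dimDeviation : ∑ i, dimDeviation N n1 Y1 Y0 i = 0 := by
  obtain rfl | hN := eq_or_ne N 0
  · simp
  simp only [dimDeviation, sum_add_distrib, ← sum_div, sum_sub_distrib, sum_const, card_univ,
    Fintype.card_fin, nsmul_eq_mul]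
  field_simp
  ring

theorem dimEst_eq_add_sum_dimDeviation (h1 : 0 < n1) (h2 : n1 < N)
    (ω : {S : Finset (Fin N) // #S = n1}) :
    dimEst N n1 Y1 Y0 ω
      = (∑ j, Y1 j) / N - (∑ j, Y0 j) / N + ∑ i ∈ ω.1, dimDeviation N n1 Y1 Y0 i := by
  have hcompl : ∑ i, (if i ∈ ω.1 then 0 else Y0 i) = ∑ j, Y0 j - ∑ i ∈ ω.1, Y0 i := by
    have hmem := sum_ite_mem univ ω.1 Y0
    rw [univ_inter] at hmem
    rw [eq_sub_iff_add_eq, ← hmem, ← sum_add_distrib]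
    exact sum_congr rfl fun i _ => by split_ifs <;> simp
  simp only [dimEst, dimDeviation, sum_ite_mem, univ_inter, hcompl, sum_add_distrib,
    ← sum_div, sum_sub_distrib, sum_const, ω.2, nsmul_eq_mul, Nat.cast_sub h2.le]
  have hn0 : (N : ℝ) - n1 ≠ 0 := sub_ne_zero.2 (by exact_mod_cast h2.ne')
  have hn1 : (n1 : ℝ) ≠ 0 := Nat.cast_ne_zero.2 h1.ne'
  have hN : (N : ℝ) ≠ 0 := Nat.cast_ne_zero.2 (h1.trans h2).ne'
  field_simp
  ring

theorem expectCRE_dimEst (h1 : 0 < n1) (h2 : n1 < N) :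
    expectCRE (dimEst N n1 Y1 Y0) = (∑ j, Y1 j) / N - (∑ j, Y0 j) / N := by
  have hK : (N.choose n1 : ℝ) ≠ 0 := Nat.cast_ne_zero.2 (Nat.choose_pos h2.le).ne'
  rw [funext (dimEst_eq_add_sum_dimDeviation Y1 Y0 h1 h2), expectCRE_eq_sum_powersetCard_div
    (fun S => (∑ j, Y1 j) / N - (∑ j, Y0 j) / N + ∑ i ∈ S, dimDeviation N n1 Y1 Y0 i),
    sum_add_distrib, sum_powersetCard_sum, sum_dimDeviation, sum_const, card_powersetCard,
    card_univ, Fintype.card_fin, nsmul_eq_mul]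
  field_simp
  ring

theorem dimVar_eq_mul_sum_sq_dimDeviation (h1 : 0 < n1) (h2 : n1 < N) :
    dimVar N n1 Y1 Y0
      = n1 * (N - n1) / (N * (N - 1)) * ∑ i, dimDeviation N n1 Y1 Y0 i ^ 2 := by
  have hK : (N.choose n1 : ℝ) ≠ 0 := Nat.cast_ne_zero.2 (Nat.choose_pos h2.le).ne'
  have hN : (N : ℝ) ≠ 0 := Nat.cast_ne_zero.2 (h1.trans h2).ne'
  have hN1 : (N : ℝ) - 1 ≠ 0 := sub_ne_zero.2 (Nat.cast_ne_one.2 (by omega))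
  have hdev : (fun ω => (dimEst N n1 Y1 Y0 ω - expectCRE (dimEst N n1 Y1 Y0)) ^ 2)
      = fun ω => (∑ i ∈ ω.1, dimDeviation N n1 Y1 Y0 i) ^ 2 := by
    ext ω
    rw [expectCRE_dimEst Y1 Y0 h1 h2, dimEst_eq_add_sum_dimDeviation Y1 Y0 h1 h2,
      add_sub_cancel_left]
  rw [dimVar, hdev,
    expectCRE_eq_sum_powersetCard_div (fun S => (∑ i ∈ S, dimDeviation N n1 Y1 Y0 i) ^ 2),
    sum_powersetCard_sq_sum, sum_dimDeviation, Fintype.card_fin]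
  field_simp
  ring

theorem dimVar_eq (h1 : 0 < n1) (h2 : n1 < N) :
    dimVar N n1 Y1 Y0
      = 1 / N * (((N - n1 : ℕ) : ℝ) / n1 * ((∑ i, (Y1 i - (∑ j, Y1 j) / N) ^ 2) / (N - 1))
        + n1 / ((N - n1 : ℕ) : ℝ) * ((∑ i, (Y0 i - (∑ j, Y0 j) / N) ^ 2) / (N - 1))
        + 2 * ((∑ i, Y1 i * Y0 i - N * ((∑ j, Y1 j) / N) * ((∑ j, Y0 j) / N)) / (N - 1))) := by
  have hn0 : (N : ℝ) - n1 ≠ 0 := sub_ne_zero.2 (by exact_mod_cast h2.ne')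
  have hn1 : (n1 : ℝ) ≠ 0 := Nat.cast_ne_zero.2 h1.ne'
  have hN : (N : ℝ) ≠ 0 := Nat.cast_ne_zero.2 (h1.trans h2).ne'
  have hN1 : (N : ℝ) - 1 ≠ 0 := sub_ne_zero.2 (Nat.cast_ne_one.2 (by omega))
  have hsq : ∑ i, dimDeviation N n1 Y1 Y0 i ^ 2
      = (∑ i, (Y1 i - (∑ j, Y1 j) / N) ^ 2) / n1 ^ 2
        + (∑ i, (Y0 i - (∑ j, Y0 j) / N) ^ 2) / (N - n1) ^ 2
        + 2 * (∑ i, (Y1 i - (∑ j, Y1 j) / N) * (Y0 i - (∑ j, Y0 j) / N)) / (n1 * (N - n1)) := by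
    simp only [sum_div, mul_sum, ← sum_add_distrib, dimDeviation, Nat.cast_sub h2.le]
    exact sum_congr rfl fun i _ => by field_simp; ring
  rw [dimVar_eq_mul_sum_sq_dimDeviation Y1 Y0 h1 h2, hsq, sum_sub_mean_mul_sub_mean,
    Nat.cast_sub h2.le]
  field_simp

end DifferenceInMeans

theorem sum_mul_comp_perm_mem_Icc {N : ℕ} {x y : Fin N → ℝ} {π ρ : Equiv.Perm (Fin N)}
    (hx : Monotone (x ∘ π)) (hy : Monotone (y ∘ ρ)) (σ : Equiv.Perm (Fin N)) :
    ∑ i, x i * y (σ i)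
      ∈ Set.Icc (∑ i, (x ∘ π) i * (y ∘ ρ) i.rev) (∑ i, (x ∘ π) i * (y ∘ ρ) i) := by
  set τ := (π.trans σ).trans ρ.symm
  have hτ : ∑ i, x i * y (σ i) = ∑ i, (x ∘ π) i * (y ∘ ρ) (τ i) := by
    rw [← Equiv.sum_comp π]
    simp [τ]
  have hlower := (hx.antivary (hy.comp_antitone Fin.rev_anti)).sum_mul_le_sum_mul_comp_perm
    (σ := τ.trans Fin.revPerm)
  simp only [Function.comp_apply, Equiv.trans_apply, Fin.revPerm_apply, Fin.rev_rev] at hlower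
  exact hτ ▸ ⟨hlower, (hx.monovary hy).sum_mul_comp_perm_le_sum_mul⟩

theorem stmt_8_general (N : ℕ) (n1 n0 : ℕ) (hn1 : 1 ≤ n1) (hn1' : n1 ≤ N - 1)
    (hn0 : n0 = N - n1)
    (Y1 Y0 a b : Fin N → ℝ)
    (hamono : Monotone a) (hbmono : Monotone b)
    (ha : ∃ π : Equiv.Perm (Fin N), a = Y1 ∘ π)
    (hb : ∃ ρ : Equiv.Perm (Fin N), b = Y0 ∘ ρ)
    (Ybar1 Ybar0 S2Y1 S2Y0 SH SL VH VL : ℝ)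
    (hY1 : Ybar1 = (∑ i, Y1 i) / (N : ℝ)) (hY0 : Ybar0 = (∑ i, Y0 i) / (N : ℝ))
    (hS1 : S2Y1 = (∑ i, (Y1 i - Ybar1) ^ 2) / ((N : ℝ) - 1))
    (hS0 : S2Y0 = (∑ i, (Y0 i - Ybar0) ^ 2) / ((N : ℝ) - 1))
    (hSH : SH = ((∑ i, a i * b i) - (N : ℝ) * Ybar1 * Ybar0) / ((N : ℝ) - 1))
    (hSL : SL = ((∑ i, a i * b i.rev) - (N : ℝ) * Ybar1 * Ybar0) / ((N : ℝ) - 1))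
    (hVH : VH = (1 / (N : ℝ)) * (((n0 : ℝ) / (n1 : ℝ)) * S2Y1
        + ((n1 : ℝ) / (n0 : ℝ)) * S2Y0 + 2 * SH))
    (hVL : VL = (1 / (N : ℝ)) * (((n0 : ℝ) / (n1 : ℝ)) * S2Y1
        + ((n1 : ℝ) / (n0 : ℝ)) * S2Y0 + 2 * SL)) :
    (∀ σ : Equiv.Perm (Fin N),
        VL ≤ dimVar N n1 Y1 (Y0 ∘ σ) ∧ dimVar N n1 Y1 (Y0 ∘ σ) ≤ VH)
      ∧ (∃ σ : Equiv.Perm (Fin N), dimVar N n1 Y1 (Y0 ∘ σ) = VH)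
      ∧ (∃ σ : Equiv.Perm (Fin N), dimVar N n1 Y1 (Y0 ∘ σ) = VL) := by
  obtain ⟨π, rfl⟩ := ha
  obtain ⟨ρ, rfl⟩ := hb
  subst hn0
  have hn1N : n1 < N := by omega
  set V : ℝ → ℝ := fun s => 1 / (N : ℝ) * ((((N - n1 : ℕ) : ℝ) / n1) * S2Y1
    + (n1 / ((N - n1 : ℕ) : ℝ)) * S2Y0 + 2 * ((s - N * Ybar1 * Ybar0) / (N - 1)))
  have hV_mono : Monotone V := fun s t hst => by
    have hN : (1 : ℝ) < N := by exact_mod_cast hn1.trans_lt hn1N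
    simp only [V]
    gcongr
  have hdimVar (σ : Equiv.Perm (Fin N)) : dimVar N n1 Y1 (Y0 ∘ σ) = V (∑ i, Y1 i * Y0 (σ i)) := by
    rw [dimVar_eq Y1 _ hn1 hn1N]
    simp only [Function.comp_apply, Equiv.sum_comp σ Y0,
      Equiv.sum_comp σ (fun i => (Y0 i - (∑ j, Y0 j) / N) ^ 2)]
    rw [← hY1, ← hY0, ← hS1, ← hS0]
  have hVH' : VH = V (∑ i, (Y1 ∘ π) i * (Y0 ∘ ρ) i) := by rw [hVH, hSH]
  have hVL' : VL = V (∑ i, (Y1 ∘ π) i * (Y0 ∘ ρ) i.rev) := by rw [hVL, hSL]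
  refine ⟨fun σ => ⟨?_, ?_⟩, ⟨π.symm.trans ρ, ?_⟩, ⟨π.symm.trans (Fin.revPerm.trans ρ), ?_⟩⟩
  · rw [hVL', hdimVar]
    exact hV_mono (sum_mul_comp_perm_mem_Icc hamono hbmono σ).1
  · rw [hVH', hdimVar]
    exact hV_mono (sum_mul_comp_perm_mem_Icc hamono hbmono σ).2
  · rw [hVH', hdimVar, ← Equiv.sum_comp π]
    simp
  · rw [hVL', hdimVar, ← Equiv.sum_comp π]
    simp

/-- **Sharp variance bounds for the difference-in-means estimator.** Let `a` and `b` be the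
nondecreasing rearrangements of the potential outcomes `Y1` and `Y0`. Then the variance of
the difference-in-means estimator over all populations obtained by permuting the
correspondence between `Y1` and `Y0` is bounded below by `Vᴸ` and above by `Vᴴ` (built from
the countermonotonic and comonotonic pairings of the sorted values), and both bounds are
attained by some permutation. -/
theorem stmt_8 (N : ℕ) (hN : 2 ≤ N) (n1 n0 : ℕ) (hn1 : 1 ≤ n1) (hn1' : n1 ≤ N - 1)
    (hn0 : n0 = N - n1)
    (Y1 Y0 a b : Fin N → ℝ)
    (hamono : Monotone a) (hbmono : Monotone b)
    (ha : ∃ π : Equiv.Perm (Fin N), a = Y1 ∘ π)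
    (hb : ∃ ρ : Equiv.Perm (Fin N), b = Y0 ∘ ρ)
    (Ybar1 Ybar0 S2Y1 S2Y0 SH SL VH VL : ℝ)
    (hY1 : Ybar1 = (∑ i, Y1 i) / (N : ℝ)) (hY0 : Ybar0 = (∑ i, Y0 i) / (N : ℝ))
    (hS1 : S2Y1 = (∑ i, (Y1 i - Ybar1) ^ 2) / ((N : ℝ) - 1))
    (hS0 : S2Y0 = (∑ i, (Y0 i - Ybar0) ^ 2) / ((N : ℝ) - 1))
    (hSH : SH = ((∑ i, a i * b i) - (N : ℝ) * Ybar1 * Ybar0) / ((N : ℝ) - 1))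
    (hSL : SL = ((∑ i, a i * b i.rev) - (N : ℝ) * Ybar1 * Ybar0) / ((N : ℝ) - 1))
    (hVH : VH = (1 / (N : ℝ)) * (((n0 : ℝ) / (n1 : ℝ)) * S2Y1
        + ((n1 : ℝ) / (n0 : ℝ)) * S2Y0 + 2 * SH))
    (hVL : VL = (1 / (N : ℝ)) * (((n0 : ℝ) / (n1 : ℝ)) * S2Y1
        + ((n1 : ℝ) / (n0 : ℝ)) * S2Y0 + 2 * SL)) :
    (∀ σ : Equiv.Perm (Fin N),
        VL ≤ dimVar N n1 Y1 (Y0 ∘ σ) ∧ dimVar N n1 Y1 (Y0 ∘ σ) ≤ VH)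
      ∧ (∃ σ : Equiv.Perm (Fin N), dimVar N n1 Y1 (Y0 ∘ σ) = VH)
      ∧ (∃ σ : Equiv.Perm (Fin N), dimVar N n1 Y1 (Y0 ∘ σ) = VL) :=
  stmt_8_general N n1 n0 hn1 hn1' hn0 Y1 Y0 a b hamono hbmono ha hb Ybar1 Ybar0 S2Y1 S2Y0 SH SL VH
    VL hY1 hY0 hS1 hS0 hSH hSL hVH hVL
end

section
/- There is a universal constant K > 0 with the following property. Let N ≥ 1, let y₁,…,y_N be points of a measurable space S, let P_N = (1/N) ∑_i δ_{y_i}, let π ∈ (0,1], and let T₁,…,T_N be i.i.d. Bernoulli(π) random variables. Let M > 0 and let 𝒢 be a countable class of measurable functions g : S → ℝ with |g(y_i)| ≤ M for every g ∈ 𝒢 and every i. Then for every η > 0 and every finite set G₀ of measurable functions S → ℝ that is an η-net of 𝒢 in L¹(P_N) (i.e., for every g ∈ 𝒢 there is g₀ ∈ G₀ with (1/N) ∑_i |g(y_i) − g₀(y_i)| ≤ η, and one may take the functions in G₀ bounded by M in absolute value on the population), one has E[ sup_{g ∈ 𝒢} | (1/(Nπ)) ∑_i T_i g(y_i) − (1/N)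 ∑_i g(y_i) | ] ≤ K · √(log(1 + |G₀|)) · M / (π √N) + (1/π + 1) · η. -/
/-!
The Horvitz–Thompson error `∑ i, a i / (N π) * (T i - π)` is a weighted sum of independent centred
variables, each confined to an interval of length one, so by Hoeffding's lemma it is sub-Gaussian
with variance proxy `M² / (4 N π²)`. For `m` sub-Gaussian variables with proxy `c`, Jensen's
inequality for `exp (t · max |Xⱼ|)` and the bound
`exp (t · max |Xⱼ|) ≤ ∑ⱼ (exp (t Xⱼ) + exp (-t Xⱼ))` give an expected maximum of at most
`√(2 c log (2 m))`. Replacing `g ∈ 𝒢` by a nearby `g₀` in the net changes the error by at most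
`η / π`, because `|T i - π| ≤ 1`. Hence `K = 1` works.
-/
open MeasureTheory ProbabilityTheory

/-- The Bernoulli(π) distribution on `ℝ`: mass `π` at `1` and mass `1 - π` at `0`. -/
noncomputable def bernoulliReal (π : ℝ) : Measure ℝ :=
  ENNReal.ofReal π • Measure.dirac (1 : ℝ) + ENNReal.ofReal (1 - π) • Measure.dirac (0 : ℝ)

open scoped NNReal ENNReal

section Bernoulli

variable {p : ℝ} {Ω : Type*} [MeasurableSpace Ω] {P : Measure Ω} {T : Ω → ℝ}

lemma ae_mem_Icc_bernoulliReal (p : ℝ) : ∀ᵐ x ∂bernoulliReal p, x ∈ Set.Icc (0 : ℝ) 1 := by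
  rw [bernoulliReal, ae_add_measure_iff]
  exact ⟨Measure.ae_smul_measure ((ae_dirac_iff measurableSet_Icc).2 (by simp)) _,
    Measure.ae_smul_measure ((ae_dirac_iff measurableSet_Icc).2 (by simp)) _⟩

lemma integral_id_bernoulliReal (hp0 : 0 ≤ p) (hp1 : p ≤ 1) : ∫ x, x ∂bernoulliReal p = p := by
  have hint (a : ℝ) (r : ℝ≥0∞) (hr : r ≠ ⊤) : Integrable (fun x : ℝ ↦ x) (r • Measure.dirac a) :=
    (integrable_dirac (by simp)).smul_measure hr
  rw [bernoulliReal, integral_add_measure (hint _ _ ENNReal.ofReal_ne_top)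
    (hint _ _ ENNReal.ofReal_ne_top), integral_smul_measure, integral_smul_measure,
    integral_dirac, integral_dirac, ENNReal.toReal_ofReal hp0, ENNReal.toReal_ofReal (by linarith)]
  simp

lemma ae_mem_Icc_of_map_eq_bernoulliReal (hT : Measurable T)
    (hmap : P.map T = bernoulliReal p) : ∀ᵐ ω ∂P, T ω ∈ Set.Icc (0 : ℝ) 1 :=
  ae_of_ae_map hT.aemeasurable (hmap ▸ ae_mem_Icc_bernoulliReal p)

lemma integral_eq_of_map_eq_bernoulliReal (hp0 : 0 ≤ p) (hp1 : p ≤ 1) (hT : Measurable T)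
    (hmap : P.map T = bernoulliReal p) : ∫ ω, T ω ∂P = p := by
  rw [← integral_id_bernoulliReal hp0 hp1, ← hmap]
  exact (integral_map hT.aemeasurable aestronglyMeasurable_id).symm

lemma hasSubgaussianMGF_sub_of_map_eq_bernoulliReal [IsProbabilityMeasure P] (hp0 : 0 ≤ p)
    (hp1 : p ≤ 1) (hT : Measurable T) (hmap : P.map T = bernoulliReal p) :
    HasSubgaussianMGF (fun ω ↦ T ω - p) (1 / 4) P := by
  have h := hasSubgaussianMGF_of_mem_Icc hT.aemeasurable
    (ae_mem_Icc_of_map_eq_bernoulliReal hT hmap)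
  rw [integral_eq_of_map_eq_bernoulliReal hp0 hp1 hT hmap] at h
  convert h using 1
  ext
  norm_num

end Bernoulli

namespace ProbabilityTheory

variable {Ω ι : Type*} {mΩ : MeasurableSpace Ω} {μ : Measure Ω} [Fintype ι]
  {X : ι → Ω → ℝ} {c : ℝ≥0}

lemma HasSubgaussianMGF.mono {Y : Ω → ℝ} {d : ℝ≥0} (h : HasSubgaussianMGF Y c μ) (hcd : c ≤ d) :
    HasSubgaussianMGF Y d μ where
  integrable_exp_mul := h.integrable_exp_mul
  mgf_le t := (h.mgf_le t).trans <| Real.exp_le_exp.2 <| by gcongr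

lemma integrable_iSup_abs (hX : ∀ j, HasSubgaussianMGF (X j) c μ) :
    Integrable (fun ω ↦ ⨆ j, |X j ω|) μ := by
  refine Integrable.mono' (integrable_finsetSum Finset.univ fun j _ ↦ (hX j).integrable.abs)
    (AEMeasurable.iSup fun j ↦ (hX j).aemeasurable.abs).aestronglyMeasurable
    (ae_of_all _ fun ω ↦ ?_)
  rw [Real.norm_eq_abs, abs_of_nonneg (Real.iSup_nonneg fun j ↦ abs_nonneg _)]
  exact Real.iSup_le (fun j ↦ Finset.single_le_sum (f := fun j ↦ |X j ω|)
    (fun j _ ↦ abs_nonneg _) (Finset.mem_univ j)) (by positivity)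

variable [Nonempty ι]

lemma exp_mul_iSup_abs_le_sum (t : ℝ) (ω : Ω) :
    Real.exp (t * ⨆ j, |X j ω|) ≤ ∑ j, (Real.exp (t * X j ω) + Real.exp (-t * X j ω)) := by
  obtain ⟨j, hj⟩ := exists_eq_ciSup_of_finite (f := fun j ↦ |X j ω|)
  have hexp_abs : Real.exp (t * |X j ω|) ≤ Real.exp (t * X j ω) + Real.exp (-t * X j ω) := by
    rcases abs_cases (X j ω) with ⟨h, -⟩ | ⟨h, -⟩ <;> rw [h]
    · exact le_add_of_nonneg_right (Real.exp_pos _).le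
    · rw [mul_neg, ← neg_mul]
      exact le_add_of_nonneg_left (Real.exp_pos _).le
  rw [← hj]
  exact hexp_abs.trans <| Finset.single_le_sum
    (f := fun j ↦ Real.exp (t * X j ω) + Real.exp (-t * X j ω))
    (fun j _ ↦ by positivity) (Finset.mem_univ j)

lemma integrable_exp_mul_iSup_abs (hX : ∀ j, HasSubgaussianMGF (X j) c μ) (t : ℝ) :
    Integrable (fun ω ↦ Real.exp (t * ⨆ j, |X j ω|)) μ := by
  refine (integrable_finsetSum Finset.univ fun j _ ↦
      ((hX j).integrable_exp_mul t).add ((hX j).integrable_exp_mul (-t))).mono'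
    ((AEMeasurable.iSup fun j ↦ (hX j).aemeasurable.abs).const_mul t).exp.aestronglyMeasurable
    (ae_of_all _ fun ω ↦ ?_)
  rw [Real.norm_eq_abs, abs_of_pos (Real.exp_pos _)]
  exact exp_mul_iSup_abs_le_sum t ω

lemma integral_exp_mul_iSup_abs_le (hX : ∀ j, HasSubgaussianMGF (X j) c μ) (t : ℝ) :
    ∫ ω, Real.exp (t * ⨆ j, |X j ω|) ∂μ ≤ 2 * Fintype.card ι * Real.exp (c * t ^ 2 / 2) := by
  have hint : ∀ j, Integrable (fun ω ↦ Real.exp (t * X j ω) + Real.exp (-t * X j ω)) μ :=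
    fun j ↦ ((hX j).integrable_exp_mul t).add ((hX j).integrable_exp_mul (-t))
  calc ∫ ω, Real.exp (t * ⨆ j, |X j ω|) ∂μ
      ≤ ∫ ω, ∑ j, (Real.exp (t * X j ω) + Real.exp (-t * X j ω)) ∂μ :=
        integral_mono (integrable_exp_mul_iSup_abs hX t)
          (integrable_finsetSum Finset.univ fun j _ ↦ hint j) (exp_mul_iSup_abs_le_sum t)
    _ = ∑ j, (mgf (X j) μ t + mgf (X j) μ (-t)) := by
        rw [integral_finsetSum _ fun j _ ↦ hint j]
        exact Finset.sum_congr rfl fun j _ ↦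
          integral_add ((hX j).integrable_exp_mul t) ((hX j).integrable_exp_mul (-t))
    _ ≤ ∑ _j : ι, (Real.exp (c * t ^ 2 / 2) + Real.exp (c * t ^ 2 / 2)) := by
        gcongr with j
        · exact (hX j).mgf_le t
        · simpa using (hX j).mgf_le (-t)
    _ = 2 * Fintype.card ι * Real.exp (c * t ^ 2 / 2) := by
        rw [Finset.sum_const, Finset.card_univ, nsmul_eq_mul]; ring

lemma integral_iSup_abs_le_of_pos [IsProbabilityMeasure μ]
    (hX : ∀ j, HasSubgaussianMGF (X j) c μ) {t : ℝ} (ht : 0 < t) :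
    ∫ ω, ⨆ j, |X j ω| ∂μ ≤ Real.log (2 * Fintype.card ι) / t + c * t / 2 := by
  have hcard : (0 : ℝ) < 2 * Fintype.card ι := by positivity
  have jensen : Real.exp (∫ ω, t * ⨆ j, |X j ω| ∂μ) ≤ ∫ ω, Real.exp (t * ⨆ j, |X j ω|) ∂μ :=
    convexOn_exp.map_integral_le Real.continuous_exp.continuousOn isClosed_univ
      (ae_of_all _ fun _ ↦ Set.mem_univ _) ((integrable_iSup_abs hX).const_mul t)
      (integrable_exp_mul_iSup_abs hX t)
  have key : t * ∫ ω, ⨆ j, |X j ω| ∂μ ≤ Real.log (2 * Fintype.card ι) + c * t ^ 2 / 2 := by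
    rw [← integral_const_mul, ← Real.exp_le_exp, Real.exp_add, Real.exp_log hcard]
    exact jensen.trans (integral_exp_mul_iSup_abs_le hX t)
  rw [show Real.log (2 * Fintype.card ι) / t + c * t / 2
      = (Real.log (2 * Fintype.card ι) + c * t ^ 2 / 2) / t by field_simp, le_div_iff₀ ht]
  linarith

omit [Nonempty ι] in
theorem integral_iSup_abs_le_of_hasSubgaussianMGF [IsProbabilityMeasure μ]
    (hX : ∀ j, HasSubgaussianMGF (X j) c μ) (hc : 0 < c) :
    ∫ ω, ⨆ j, |X j ω| ∂μ ≤ Real.sqrt (2 * c * Real.log (2 * Fintype.card ι)) := by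
  cases isEmpty_or_nonempty ι
  · simp
  set L := Real.log (2 * Fintype.card ι)
  have hL : 0 < L := Real.log_pos <| by
    have : (1 : ℝ) ≤ Fintype.card ι := by exact_mod_cast Fintype.card_pos
    linarith
  have hc' : (0 : ℝ) < c := hc
  set t := Real.sqrt (2 * L / c)
  have ht : 0 < t := Real.sqrt_pos.2 (by positivity)
  have ht_sq : c * t ^ 2 = 2 * L := by
    rw [Real.sq_sqrt (by positivity)]; field_simp
  have hsqrt : Real.sqrt (2 * c * L) = c * t := by
    rw [← Real.sqrt_sq (by positivity : 0 ≤ (c : ℝ) * t)]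
    congr 1
    linear_combination (-(c : ℝ)) * ht_sq
  refine (integral_iSup_abs_le_of_pos hX ht).trans_eq ?_
  rw [hsqrt]
  field_simp
  linear_combination -ht_sq

end ProbabilityTheory

section HorvitzThompson

variable {N : ℕ} {π : ℝ}

noncomputable def horvitzThompsonError (π : ℝ) (t a : Fin N → ℝ) : ℝ :=
  (∑ i, t i * a i) / ((N : ℝ) * π) - (∑ i, a i) / (N : ℝ)

lemma horvitzThompsonError_eq_sum (hπ : π ≠ 0) (t a : Fin N → ℝ) :
    horvitzThompsonError π t a = ∑ i, a i / (N * π) * (t i - π) := by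
  rw [horvitzThompsonError, Finset.sum_div, Finset.sum_div, ← Finset.sum_sub_distrib]
  refine Finset.sum_congr rfl fun i _ ↦ ?_
  rw [mul_sub, ← mul_div_mul_right (a i) (N : ℝ) hπ]
  ring

lemma horvitzThompsonError_sub (π : ℝ) (t a b : Fin N → ℝ) :
    horvitzThompsonError π t a - horvitzThompsonError π t b = horvitzThompsonError π t (a - b) := by
  simp only [horvitzThompsonError, Pi.sub_apply, mul_sub, Finset.sum_sub_distrib]
  ring

lemma abs_horvitzThompsonError_le (hπ0 : 0 < π) (hπ1 : π ≤ 1) {t : Fin N → ℝ}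
    (ht : ∀ i, t i ∈ Set.Icc (0 : ℝ) 1) (a : Fin N → ℝ) :
    |horvitzThompsonError π t a| ≤ (∑ i, |a i|) / N / π := by
  have hweight : ∀ i, |t i - π| ≤ 1 := fun i ↦ by
    rw [abs_sub_le_iff]; constructor <;> linarith [(ht i).1, (ht i).2]
  rw [horvitzThompsonError_eq_sum hπ0.ne']
  calc |∑ i, a i / (N * π) * (t i - π)|
      ≤ ∑ i, |a i / (N * π) * (t i - π)| := Finset.abs_sum_le_sum_abs _ _
    _ ≤ ∑ i, |a i| / (N * π) := by
        gcongr with i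
        rw [abs_mul, abs_div, abs_of_nonneg (by positivity : (0 : ℝ) ≤ N * π)]
        exact mul_le_of_le_one_right (by positivity) (hweight i)
    _ = (∑ i, |a i|) / N / π := by rw [← Finset.sum_div, div_div]

lemma iSup_abs_horvitzThompsonError_le_of_net {S : Type*} (y : Fin N → S) {𝒢 : Set (S → ℝ)}
    {G₀ : Finset (S → ℝ)} {η : ℝ} (hη : 0 ≤ η)
    (hnet : ∀ g ∈ 𝒢, ∃ g₀ ∈ G₀, (∑ i, |g (y i) - g₀ (y i)|) / N ≤ η)
    (hπ0 : 0 < π) (hπ1 : π ≤ 1) {t : Fin N → ℝ} (ht : ∀ i, t i ∈ Set.Icc (0 : ℝ) 1) :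
    ⨆ g : 𝒢, |horvitzThompsonError π t fun i ↦ g.1 (y i)|
      ≤ (⨆ g₀ : G₀, |horvitzThompsonError π t fun i ↦ g₀.1 (y i)|) + η / π := by
  refine Real.iSup_le (fun ⟨g, hg⟩ ↦ ?_)
    (add_nonneg (Real.iSup_nonneg fun _ ↦ abs_nonneg _) (by positivity))
  obtain ⟨g₀, hg₀, hclose⟩ := hnet g hg
  have happrox := abs_horvitzThompsonError_le hπ0 hπ1 ht
    ((fun i ↦ g (y i)) - fun i ↦ g₀ (y i))
  rw [← horvitzThompsonError_sub] at happrox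
  simp only [Pi.sub_apply] at happrox
  calc |horvitzThompsonError π t fun i ↦ g (y i)|
      ≤ |horvitzThompsonError π t fun i ↦ g₀ (y i)| + η / π := by
        have htriangle := abs_sub_abs_le_abs_sub (horvitzThompsonError π t fun i ↦ g (y i))
          (horvitzThompsonError π t fun i ↦ g₀ (y i))
        have hscaled : (∑ i, |g (y i) - g₀ (y i)|) / N / π ≤ η / π := by gcongr
        linarith
    _ ≤ _ := by
        gcongr
        exact le_ciSup (f := fun g₀ : G₀ ↦ |horvitzThompsonError π t fun i ↦ g₀.1 (y i)|)
          (Set.finite_range _).bddAbove ⟨g₀, hg₀⟩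

lemma hasSubgaussianMGF_horvitzThompsonError {Ω : Type*} [MeasurableSpace Ω] {P : Measure Ω}
    [IsProbabilityMeasure P] {T : Fin N → Ω → ℝ} (hT : ∀ i, Measurable (T i))
    (hind : iIndepFun T P) (hmap : ∀ i, P.map (T i) = bernoulliReal π) (hπ0 : 0 < π)
    (hπ1 : π ≤ 1) {M : ℝ} {a : Fin N → ℝ} (ha : ∀ i, |a i| ≤ M) :
    HasSubgaussianMGF (fun ω ↦ horvitzThompsonError π (fun i ↦ T i ω) a)
      ⟨M ^ 2 / (4 * N * π ^ 2), by positivity⟩ P := by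
  set b : Fin N → ℝ := fun i ↦ a i / (N * π)
  have hsum := HasSubgaussianMGF.sum_of_iIndepFun (s := Finset.univ)
    (hind.comp (fun i x ↦ b i * (x - π)) fun i ↦ by fun_prop) fun i _ ↦
      (hasSubgaussianMGF_sub_of_map_eq_bernoulliReal hπ0.le hπ1 (hT i) (hmap i)).const_mul (b i)
  refine (hsum.congr (ae_of_all _ fun ω ↦
    (horvitzThompsonError_eq_sum hπ0.ne' (fun i ↦ T i ω) a).symm)).mono ?_
  refine NNReal.coe_le_coe.1 ?_
  push_cast
  rcases eq_or_ne N 0 with rfl | hN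
  · simp only [Finset.univ_eq_empty, Finset.sum_empty]
    exact NNReal.coe_nonneg _
  have hb : ∀ i, b i ^ 2 ≤ (M / (N * π)) ^ 2 := fun i ↦ by
    rw [← sq_abs, abs_div, abs_of_pos (by positivity : (0 : ℝ) < N * π)]
    gcongr
    exact ha i
  calc ∑ i, b i ^ 2 * (1 / 4) ≤ ∑ _i : Fin N, (M / (N * π)) ^ 2 * (1 / 4) := by
        gcongr ∑ i, ?_ * _ with i
        exact hb i
    _ = M ^ 2 / (4 * N * π ^ 2) := by
        rw [Finset.sum_const, Finset.card_univ, Fintype.card_fin, nsmul_eq_mul]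
        field_simp

end HorvitzThompson

lemma sqrt_two_mul_log_two_mul_le {N m : ℕ} {π M : ℝ} (hπ : 0 < π) (hM : 0 ≤ M) :
    Real.sqrt (2 * (M ^ 2 / (4 * N * π ^ 2)) * Real.log (2 * m))
      ≤ Real.sqrt (Real.log (1 + m)) * M / (π * Real.sqrt N) := by
  have hlog : Real.log (2 * m) ≤ 2 * Real.log (1 + m) := by
    rcases Nat.eq_zero_or_pos m with rfl | hm
    · simp
    rw [show 2 * Real.log (1 + m) = Real.log ((1 + m) ^ 2) by rw [Real.log_pow]; norm_num]
    exact Real.log_le_log (by positivity) (by nlinarith)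
  have hrhs : Real.sqrt (Real.log (1 + m)) * M / (π * Real.sqrt N)
      = Real.sqrt (Real.log (1 + m) * (M ^ 2 / (N * π ^ 2))) := by
    rw [Real.sqrt_mul (Real.log_nonneg (by simp)), Real.sqrt_div (sq_nonneg M), Real.sqrt_sq hM,
      Real.sqrt_mul (Nat.cast_nonneg N), Real.sqrt_sq hπ.le]
    ring
  rw [hrhs]
  apply Real.sqrt_le_sqrt
  have : (0 : ℝ) ≤ M ^ 2 / (N * π ^ 2) := by positivity
  calc 2 * (M ^ 2 / (4 * N * π ^ 2)) * Real.log (2 * m)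
      = Real.log (2 * m) / 2 * (M ^ 2 / (N * π ^ 2)) := by ring
    _ ≤ Real.log (1 + m) * (M ^ 2 / (N * π ^ 2)) := by gcongr; linarith

/-- **Finite-sample maximal inequality for Horvitz–Thompson empirical means.** There is a
universal constant `K > 0` such that for any finite population `y : Fin N → S`, any i.i.d.
Bernoulli(π) sampling indicators `T i`, any countable class `𝒢` of measurable functions
bounded by `M` on the population, and any finite `η`-net `G₀` of `𝒢` in `L¹(P_N)` whose
elements are also bounded by `M`, the expected supremum over `𝒢` of the absolute deviation
of the Horvitz–Thompson mean from the population mean is at most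
`K √(log(1 + |G₀|)) M / (π √N) + (1/π + 1) η`. -/
theorem stmt_10 :
    ∃ K : ℝ, 0 < K ∧
      ∀ (S : Type) (_ : MeasurableSpace S) (N : ℕ), 1 ≤ N →
        ∀ (y : Fin N → S) (π : ℝ), π ∈ Set.Ioc (0 : ℝ) 1 →
        ∀ (Ω : Type) (_ : MeasurableSpace Ω) (P : Measure Ω), IsProbabilityMeasure P →
        ∀ (T : Fin N → Ω → ℝ), (∀ i, Measurable (T i)) →
          iIndepFun T P →
          (∀ i, Measure.map (T i) P = bernoulliReal π) →
        ∀ (M : ℝ), 0 < M →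
        ∀ (𝒢 : Set (S → ℝ)), 𝒢.Countable → (∀ g ∈ 𝒢, Measurable g) →
          (∀ g ∈ 𝒢, ∀ i, |g (y i)| ≤ M) →
        ∀ (η : ℝ), 0 < η →
        ∀ (G₀ : Finset (S → ℝ)), (∀ g₀ ∈ G₀, Measurable g₀) →
          (∀ g₀ ∈ G₀, ∀ i, |g₀ (y i)| ≤ M) →
          (∀ g ∈ 𝒢, ∃ g₀ ∈ G₀, (∑ i, |g (y i) - g₀ (y i)|) / (N : ℝ) ≤ η) →
        ∫ ω, (⨆ g : 𝒢, |(∑ i, T i ω * g.1 (y i)) / ((N : ℝ) * π)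
            - (∑ i, g.1 (y i)) / (N : ℝ)|) ∂P
          ≤ K * Real.sqrt (Real.log (1 + (G₀.card : ℝ))) * M / (π * Real.sqrt N)
            + (1 / π + 1) * η := by
  refine ⟨1, one_pos, ?_⟩
  intro S _ N hN y π ⟨hπ0, hπ1⟩ Ω _ P _ T hT hind hmap M hM 𝒢 _ _ _ η hη G₀ _ hG₀ hnet
  have hN0 : (0 : ℝ) < N := by exact_mod_cast hN
  set c : ℝ≥0 := ⟨M ^ 2 / (4 * N * π ^ 2), by positivity⟩
  have hsub : ∀ g₀ : G₀, HasSubgaussianMGF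
      (fun ω ↦ horvitzThompsonError π (fun i ↦ T i ω) fun i ↦ g₀.1 (y i)) c P :=
    fun g₀ ↦ hasSubgaussianMGF_horvitzThompsonError hT hind hmap hπ0 hπ1 (hG₀ g₀ g₀.2)
  have hae : ∀ᵐ ω ∂P, ∀ i, T i ω ∈ Set.Icc (0 : ℝ) 1 :=
    ae_all_iff.2 fun i ↦ ae_mem_Icc_of_map_eq_bernoulliReal (hT i) (hmap i)
  have hint := integrable_iSup_abs hsub
  calc ∫ ω, (⨆ g : 𝒢, |horvitzThompsonError π (fun i ↦ T i ω) fun i ↦ g.1 (y i)|) ∂P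
      ≤ ∫ ω, ((⨆ g₀ : G₀, |horvitzThompsonError π (fun i ↦ T i ω) fun i ↦ g₀.1 (y i)|)
          + η / π) ∂P :=
        integral_mono_of_nonneg (ae_of_all _ fun ω ↦ Real.iSup_nonneg fun _ ↦ abs_nonneg _)
          (hint.add (integrable_const _))
          (hae.mono fun ω hω ↦ iSup_abs_horvitzThompsonError_le_of_net y hη.le hnet hπ0 hπ1 hω)
    _ ≤ Real.sqrt (2 * c * Real.log (2 * G₀.card)) + η / π := by
        rw [integral_add hint (integrable_const _), integral_const, probReal_univ, one_smul,
          ← Fintype.card_coe G₀]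
        gcongr
        exact integral_iSup_abs_le_of_hasSubgaussianMGF hsub
          (NNReal.coe_pos.1 (show (0 : ℝ) < M ^ 2 / (4 * N * π ^ 2) by positivity))
    _ ≤ 1 * Real.sqrt (Real.log (1 + (G₀.card : ℝ))) * M / (π * Real.sqrt N)
          + (1 / π + 1) * η := by
        rw [one_mul]
        gcongr
        · exact sqrt_two_mul_log_two_mul_le hπ0 hM.le
        · linarith [show (1 / π + 1) * η = η / π + η by ring]
end

section
/- Fix π ∈ (0,1). For each N ≥ 1 let y_{N,1},…,y_{N,N} be points of a measurable space S with empirical measure P_N = (1/N) ∑_i δ_{y_{N,i}}, and let T_{N,1},…,T_{N,N} be i.i.d. Bernoulli(π) random variables. Let 𝒢 be a countable class of measurable functions S → ℝ with a measurable envelope F (|g| ≤ F pointwise for all g ∈ 𝒢), and for M > 0 let 𝒢_M = { g·1{F ≤ M} : g ∈ 𝒢 }. For ε > 0 let 𝒩(ε, 𝒢_M, L¹(P_N)) denote the minimal cardinality of an ε-net of 𝒢_M in L¹(P_N). Assume: (i) uniform integrability of the envelope, i.e., sup_N (1/N) ∑_i F(y_{N,i}) 1{F(y_{N,i}) > M}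 → 0 as M → ∞; and (ii) for every M > 0 and every ε > 0, (1/N) log 𝒩(ε, 𝒢_M, L¹(P_N)) → 0 as N → ∞. Then sup_{g ∈ 𝒢} | (1/(Nπ)) ∑_i T_{N,i} g(y_{N,i}) − (1/N) ∑_i g(y_{N,i}) | → 0 in probability as N → ∞. -/
open MeasureTheory ProbabilityTheory

/-- `G₀` is an `ε`-net of the class `C` in `L¹(P_N)`, where `P_N` is the empirical measure
of the finite population `y`. -/
def IsNet {S : Type*} {N : ℕ} (y : Fin N → S) (ε : ℝ) (C : Set (S → ℝ))
    (G₀ : Finset (S → ℝ)) : Prop :=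
  ∀ g ∈ C, ∃ g₀ ∈ G₀, (∑ i, |g (y i) - g₀ (y i)|) / (N : ℝ) ≤ ε

/-- The `ε`-covering number of the class `C` in `L¹(P_N)`: the minimal cardinality of a
finite `ε`-net. -/
noncomputable def covNum {S : Type*} {N : ℕ} (y : Fin N → S) (ε : ℝ)
    (C : Set (S → ℝ)) : ℕ :=
  sInf {m : ℕ | ∃ G₀ : Finset (S → ℝ), G₀.card = m ∧ IsNet y ε C G₀}

/-!
On the almost sure event that all sampling indicators lie in `[0, 1]`, the Horvitz–Thompson
deviation `htDeviation π y t g` is `(1 + π⁻¹)`-Lipschitz in `g` for the `L¹(P_N)` distance.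
Truncating at a level `M` supplied by uniform integrability and clipping a minimal `δ`-net of
`𝒢_M` to `[-M, M]` yields at most `𝒩(δ, 𝒢_M, L¹(P_N))` functions bounded by `M` such that a
deviation `ε` somewhere on `𝒢` forces a deviation `ε / 2` at one of them. Hoeffding's inequality
bounds each of these events by `2 exp (-r N)`, and the entropy condition makes the union bound
`𝒩 · 2 exp (-r N)` tend to zero.
-/

open Set Filter Topology
open scoped NNReal

namespace ProbabilityTheory

variable {Ω : Type*} [MeasurableSpace Ω] {P : Measure Ω}

lemma HasSubgaussianMGF.measureReal_abs_sum_ge_le_of_iIndepFun {ι : Type*} {X : ι → Ω → ℝ}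
    (h_indep : iIndepFun X P) {c : ι → ℝ≥0} {s : Finset ι}
    (h_subG : ∀ i ∈ s, HasSubgaussianMGF (X i) (c i) P) {ε : ℝ} (hε : 0 ≤ ε) :
    P.real {ω | ε ≤ |∑ i ∈ s, X i ω|} ≤ 2 * Real.exp (-ε ^ 2 / (2 * ∑ i ∈ s, c i)) := by
  have : IsProbabilityMeasure P := h_indep.isProbabilityMeasure
  have h_upper := measure_sum_ge_le_of_iIndepFun h_indep h_subG hε
  have h_lower := measure_sum_ge_le_of_iIndepFun (X := fun i ω => -X i ω)
    (h_indep.comp (fun _ x => -x) fun _ => measurable_neg) (fun i hi => (h_subG i hi).neg) hε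
  calc P.real {ω | ε ≤ |∑ i ∈ s, X i ω|}
      ≤ P.real ({ω | ε ≤ ∑ i ∈ s, X i ω} ∪ {ω | ε ≤ ∑ i ∈ s, -X i ω}) := by
        refine measureReal_mono fun ω hω => ?_
        simp only [mem_ofPred_eq, Finset.sum_neg_distrib, mem_union] at hω ⊢
        exact le_abs.mp hω
    _ ≤ _ := (measureReal_union_le _ _).trans (by linarith)

lemma ae_mem_Icc_of_map_eq_bernoulliReal {X : Ω → ℝ} (hX : AEMeasurable X P) {π : ℝ}
    (hlaw : P.map X = bernoulliReal π) : ∀ᵐ ω ∂P, X ω ∈ Icc (0 : ℝ) 1 := by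
  refine ae_of_ae_map hX ?_
  rw [hlaw, bernoulliReal, ae_add_measure_iff]
  constructor <;> exact Measure.ae_smul_measure (by simp) _

lemma bernoulliReal_eq_bernoulliMeasure {π : ℝ} (hπ : π ∈ unitInterval) :
    bernoulliReal π = bernoulliMeasure 1 0 ⟨π, hπ⟩ := by
  rw [bernoulliReal, bernoulliMeasure_def, ENNReal.ofReal, ENNReal.ofReal]
  congr 3 <;> ext <;> simp [hπ.1, hπ.2]

lemma integral_eq_of_map_eq_bernoulliReal {X : Ω → ℝ} (hX : AEMeasurable X P) {π : ℝ}
    (hπ : π ∈ unitInterval) (hlaw : P.map X = bernoulliReal π) : P[X] = π := by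
  calc P[X] = ∫ x, x ∂(P.map X) := (integral_map hX aestronglyMeasurable_id).symm
    _ = π := by simp [hlaw, bernoulliReal_eq_bernoulliMeasure hπ, integral_bernoulliMeasure]

lemma hasSubgaussianMGF_sub_mul_of_map_eq_bernoulliReal [IsProbabilityMeasure P] {X : Ω → ℝ}
    (hX : AEMeasurable X P) {π : ℝ} (hπ : π ∈ unitInterval)
    (hlaw : P.map X = bernoulliReal π) {a : ℝ} {c : ℝ≥0} (ha : |a| ≤ c) :
    HasSubgaussianMGF (fun ω => (X ω - π) * a) (c ^ 2) P := by
  have hbound : ∀ᵐ ω ∂P, (X ω - π) * a ∈ Icc (-(c : ℝ)) c := by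
    filter_upwards [ae_mem_Icc_of_map_eq_bernoulliReal hX hlaw] with ω ⟨hX0, hX1⟩
    rw [mem_Icc, ← abs_le, abs_mul]
    have : |X ω - π| ≤ 1 := abs_sub_le_iff.mpr ⟨by linarith [hπ.1], by linarith [hπ.2]⟩
    nlinarith [abs_nonneg (X ω - π), abs_nonneg a]
  have hmean : P[fun ω => (X ω - π) * a] = 0 := by
    rw [integral_mul_const, integral_sub (Integrable.of_mem_Icc 0 1 hX
      (ae_mem_Icc_of_map_eq_bernoulliReal hX hlaw)) (integrable_const π),
      integral_eq_of_map_eq_bernoulliReal hX hπ hlaw]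
    simp
  convert hasSubgaussianMGF_of_mem_Icc_of_integral_eq_zero (by fun_prop) hbound hmean using 1
  ext
  simp [← two_mul]

lemma measureReal_abs_sum_sub_mul_ge_le_of_bernoulliReal {ι : Type*} [Fintype ι]
    {T : ι → Ω → ℝ} (hT : ∀ i, AEMeasurable (T i) P) (h_indep : iIndepFun T P) {π : ℝ}
    (hπ : π ∈ unitInterval) (hlaw : ∀ i, P.map (T i) = bernoulliReal π) (a : ι → ℝ)
    {c : ℝ≥0} (ha : ∀ i, |a i| ≤ c) {s : ℝ} (hs : 0 ≤ s) :
    P.real {ω | s ≤ |∑ i, (T i ω - π) * a i|}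
      ≤ 2 * Real.exp (-s ^ 2 / (2 * (Fintype.card ι * c ^ 2))) := by
  have : IsProbabilityMeasure P := h_indep.isProbabilityMeasure
  have h := HasSubgaussianMGF.measureReal_abs_sum_ge_le_of_iIndepFun
    (h_indep.comp (fun i x => (x - π) * a i) fun i => by fun_prop) (s := Finset.univ)
    (fun i _ => hasSubgaussianMGF_sub_mul_of_map_eq_bernoulliReal (hT i) hπ (hlaw i) (ha i)) hs
  simpa using h

end ProbabilityTheory

section HorvitzThompson

variable {S : Type*} {N : ℕ}

noncomputable def htDeviation (π : ℝ) (y : Fin N → S) (t : Fin N → ℝ) (g : S → ℝ) : ℝ :=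
  (∑ i, t i * g (y i)) / (N * π) - (∑ i, g (y i)) / N

lemma htDeviation_sub (π : ℝ) (y : Fin N → S) (t : Fin N → ℝ) (f g : S → ℝ) :
    htDeviation π y t f - htDeviation π y t g = htDeviation π y t (f - g) := by
  simp only [htDeviation, Pi.sub_apply, mul_sub, Finset.sum_sub_distrib]
  ring

lemma htDeviation_eq_sum_sub_mul {π : ℝ} (hπ : π ≠ 0) (y : Fin N → S) (t : Fin N → ℝ)
    (g : S → ℝ) : htDeviation π y t g = (∑ i, (t i - π) * (g (y i) / π)) / N := by
  have hterm : ∀ i, (t i - π) * (g (y i) / π) = t i * g (y i) / π - g (y i) := fun i => by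
    field_simp
  simp only [htDeviation, hterm, Finset.sum_sub_distrib, ← Finset.sum_div]
  rw [sub_div, div_div, mul_comm π]

lemma abs_htDeviation_le {π : ℝ} (hπ : 0 < π) (y : Fin N → S) {t : Fin N → ℝ}
    (ht : ∀ i, t i ∈ Icc (0 : ℝ) 1) (g : S → ℝ) :
    |htDeviation π y t g| ≤ (1 + π⁻¹) * ((∑ i, |g (y i)|) / N) := by
  have hweighted : |∑ i, t i * g (y i)| ≤ ∑ i, |g (y i)| := by
    refine (Finset.abs_sum_le_sum_abs _ _).trans (Finset.sum_le_sum fun i _ => ?_)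
    rw [abs_mul, abs_of_nonneg (ht i).1]
    exact mul_le_of_le_one_left (abs_nonneg _) (ht i).2
  calc |htDeviation π y t g|
      ≤ |∑ i, t i * g (y i)| / (N * π) + |∑ i, g (y i)| / N := by
        refine (abs_sub _ _).trans_eq ?_
        rw [abs_div, abs_div, abs_of_nonneg (by positivity : (0 : ℝ) ≤ N * π), Nat.abs_cast]
    _ ≤ (∑ i, |g (y i)|) / (N * π) + (∑ i, |g (y i)|) / N := by
        gcongr
        exact Finset.abs_sum_le_sum_abs _ _
    _ = (1 + π⁻¹) * ((∑ i, |g (y i)|) / N) := by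
        field_simp
        ring

end HorvitzThompson

section Nets

variable {S : Type*} {N : ℕ} {y : Fin N → S}

lemma exists_isNet_card_eq_covNum {ε : ℝ} {C : Set (S → ℝ)}
    (h : {m : ℕ | ∃ G₀ : Finset (S → ℝ), G₀.card = m ∧ IsNet y ε C G₀}.Nonempty) :
    ∃ G₀ : Finset (S → ℝ), G₀.card = covNum y ε C ∧ IsNet y ε C G₀ :=
  Nat.sInf_mem h

lemma IsNet.of_approx {δ δ' : ℝ} {C D : Set (S → ℝ)} {G₀ : Finset (S → ℝ)}
    (hG₀ : IsNet y δ C G₀)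
    (hD : ∀ g ∈ D, ∃ h ∈ C, (∑ i, |g (y i) - h (y i)|) / (N : ℝ) ≤ δ') :
    IsNet y (δ' + δ) D G₀ := by
  intro g hg
  obtain ⟨h, hC, hgh⟩ := hD g hg
  obtain ⟨g₀, hG, hhg₀⟩ := hG₀ h hC
  refine ⟨g₀, hG, le_trans ?_ (add_le_add hgh hhg₀)⟩
  rw [← add_div, ← Finset.sum_add_distrib]
  gcongr with i
  exact abs_sub_le _ _ _

lemma IsNet.image_projIcc [DecidableEq (S → ℝ)] {ε a b : ℝ} (hab : a ≤ b) {C : Set (S → ℝ)}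
    {G₀ : Finset (S → ℝ)} (hC : ∀ g ∈ C, ∀ x, g x ∈ Icc a b) (hG₀ : IsNet y ε C G₀) :
    IsNet y ε C (G₀.image fun g x => projIcc a b hab (g x)) := by
  intro g hg
  obtain ⟨g₀, hG, hgg₀⟩ := hG₀ g hg
  refine ⟨_, Finset.mem_image_of_mem _ hG, le_trans ?_ hgg₀⟩
  refine div_le_div_of_nonneg_right (Finset.sum_le_sum fun i _ => ?_) N.cast_nonneg
  calc |g (y i) - projIcc a b hab (g₀ (y i))|
      = |(projIcc a b hab (g (y i)) : ℝ) - projIcc a b hab (g₀ (y i))| := by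
        rw [projIcc_of_mem hab (hC g hg _)]
    _ ≤ |g (y i) - g₀ (y i)| := abs_projIcc_sub_projIcc hab

end Nets

lemma abs_sub_ite_le_ite {a f : ℝ} (M : ℝ) (ha : |a| ≤ f) :
    |a - if f ≤ M then a else 0| ≤ if M < f then f else 0 := by
  split_ifs with h₁ h₂ h₂
  · linarith
  · simp
  · simpa using ha
  · exact absurd (not_le.mp h₁) h₂

section Deviation

variable {S : Type*} {N : ℕ} {π : ℝ} {y : Fin N → S}

lemma exists_half_le_abs_htDeviation_of_le_iSup (hπ : 0 < π) {t : Fin N → ℝ}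
    (ht : ∀ i, t i ∈ Icc (0 : ℝ) 1) {ε : ℝ} (hε : 0 < ε) {𝒢 : Set (S → ℝ)}
    {G₀ : Finset (S → ℝ)} (hG₀ : IsNet y (ε / (4 * (1 + π⁻¹))) 𝒢 G₀)
    (hsup : ε ≤ ⨆ g : 𝒢, |htDeviation π y t g|) :
    ∃ k ∈ G₀, ε / 2 ≤ |htDeviation π y t k| := by
  by_contra! hsmall
  have hbound : ∀ g : 𝒢, |htDeviation π y t g| ≤ 3 * ε / 4 := by
    rintro ⟨g, hg⟩
    obtain ⟨k, hk, hgk⟩ := hG₀ g hg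
    have hclose : |htDeviation π y t g - htDeviation π y t k| ≤ ε / 4 := by
      rw [htDeviation_sub]
      refine (abs_htDeviation_le hπ y ht _).trans ?_
      rw [le_div_iff₀ (by positivity)] at hgk
      simp only [Pi.sub_apply]
      linarith
    linarith [abs_sub_abs_le_abs_sub (htDeviation π y t g) (htDeviation π y t k), hsmall k hk]
  linarith [Real.iSup_le hbound (by positivity)]

variable {Ω : Type*} [MeasurableSpace Ω] {P : Measure Ω}

lemma measureReal_le_iSup_abs_htDeviation_le (hπ : π ∈ Ioo (0 : ℝ) 1) {T : Fin N → Ω → ℝ}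
    (hT : ∀ i, AEMeasurable (T i) P) (h_indep : iIndepFun T P)
    (hlaw : ∀ i, P.map (T i) = bernoulliReal π) (hN : 0 < N) {ε M : ℝ} (hε : 0 < ε)
    (hM : 0 < M) {𝒢 : Set (S → ℝ)} {G₀ : Finset (S → ℝ)}
    (hG₀M : ∀ k ∈ G₀, ∀ x, |k x| ≤ M) (hG₀ : IsNet y (ε / (4 * (1 + π⁻¹))) 𝒢 G₀) :
    P.real {ω | ε ≤ ⨆ g : 𝒢, |htDeviation π y (fun i => T i ω) g|}
      ≤ G₀.card * (2 * Real.exp (-(N * ((ε * π / M) ^ 2 / 8)))) := by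
  have := h_indep.isProbabilityMeasure
  obtain ⟨hπ0, hπ1⟩ := hπ
  have hN' : (0 : ℝ) < N := Nat.cast_pos.mpr hN
  have hsub : {ω | ε ≤ ⨆ g : 𝒢, |htDeviation π y (fun i => T i ω) g|}
      ≤ᵐ[P] ⋃ k ∈ G₀, {ω | N * (ε / 2) ≤ |∑ i, (T i ω - π) * (k (y i) / π)|} := by
    filter_upwards [ae_all_iff.mpr fun i => ae_mem_Icc_of_map_eq_bernoulliReal (hT i) (hlaw i)]
      with ω hω hsup
    obtain ⟨k, hk, hdev⟩ := exists_half_le_abs_htDeviation_of_le_iSup hπ0 hω hε hG₀ hsup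
    rw [htDeviation_eq_sum_sub_mul hπ0.ne', abs_div, Nat.abs_cast, le_div_iff₀ hN'] at hdev
    exact mem_biUnion hk (by rw [mem_ofPred_eq]; linarith)
  have hcoef : ∀ k ∈ G₀, ∀ i, |k (y i) / π| ≤ (M / π).toNNReal := fun k hk i => by
    rw [Real.coe_toNNReal _ (by positivity), abs_div, abs_of_pos hπ0]
    gcongr
    exact hG₀M k hk _
  calc P.real {ω | ε ≤ ⨆ g : 𝒢, |htDeviation π y (fun i => T i ω) g|}
      ≤ P.real (⋃ k ∈ G₀, {ω | N * (ε / 2) ≤ |∑ i, (T i ω - π) * (k (y i) / π)|}) :=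
        ENNReal.toReal_mono (measure_ne_top _ _) (measure_mono_ae hsub)
    _ ≤ ∑ k ∈ G₀, P.real {ω | N * (ε / 2) ≤ |∑ i, (T i ω - π) * (k (y i) / π)|} :=
        measureReal_biUnion_finset_le _ _
    _ ≤ ∑ k ∈ G₀, 2 * Real.exp (-(N * ((ε * π / M) ^ 2 / 8))) := by
        refine Finset.sum_le_sum fun k hk => ?_
        refine (measureReal_abs_sum_sub_mul_ge_le_of_bernoulliReal hT h_indep
          ⟨hπ0.le, hπ1.le⟩ hlaw _ (hcoef k hk) (by positivity)).trans_eq ?_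
        rw [Real.coe_toNNReal _ (by positivity), Fintype.card_fin]
        field_simp
        ring_nf
    _ = G₀.card * (2 * Real.exp (-(N * ((ε * π / M) ^ 2 / 8)))) := by
        rw [Finset.sum_const, nsmul_eq_mul]

lemma measureReal_le_iSup_abs_htDeviation_le_covNum [DecidableEq (S → ℝ)]
    (hπ : π ∈ Ioo (0 : ℝ) 1) {T : Fin N → Ω → ℝ} (hT : ∀ i, AEMeasurable (T i) P)
    (h_indep : iIndepFun T P) (hlaw : ∀ i, P.map (T i) = bernoulliReal π) (hN : 0 < N)
    {ε M : ℝ} (hε : 0 < ε) (hM : 0 < M) {𝒢 : Set (S → ℝ)} {F : S → ℝ}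
    (henv : ∀ g ∈ 𝒢, ∀ x, |g x| ≤ F x)
    (htail : (∑ i, if M < F (y i) then F (y i) else 0) / (N : ℝ) ≤ ε / (8 * (1 + π⁻¹)))
    (hnet : {m : ℕ | ∃ G₀ : Finset (S → ℝ), G₀.card = m ∧ IsNet y (ε / (8 * (1 + π⁻¹)))
      ((fun g x => if F x ≤ M then g x else 0) '' 𝒢) G₀}.Nonempty) :
    P.real {ω | ε ≤ ⨆ g : 𝒢, |htDeviation π y (fun i => T i ω) g|}
      ≤ covNum y (ε / (8 * (1 + π⁻¹))) ((fun g x => if F x ≤ M then g x else 0) '' 𝒢)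
        * (2 * Real.exp (-(N * ((ε * π / M) ^ 2 / 8)))) := by
  obtain ⟨G₀, hcard, hG₀⟩ := exists_isNet_card_eq_covNum hnet
  have htrunc_mem : ∀ h ∈ (fun g x => if F x ≤ M then g x else 0) '' 𝒢, ∀ x, h x ∈ Icc (-M) M := by
    rintro _ ⟨g, hg, rfl⟩ x
    dsimp only
    split_ifs with hFx
    · exact abs_le.mp ((henv g hg x).trans hFx)
    · exact ⟨by linarith, hM.le⟩
  have hnet𝒢 := (hG₀.image_projIcc (by linarith) htrunc_mem).of_approx (D := 𝒢)
    fun g hg => ⟨_, Set.mem_image_of_mem _ hg, le_trans (div_le_div_of_nonneg_right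
      (Finset.sum_le_sum fun i _ => abs_sub_ite_le_ite M (henv g hg _)) N.cast_nonneg) htail⟩
  have hK : 0 < 1 + π⁻¹ := by have := hπ.1; positivity
  rw [show ε / (8 * (1 + π⁻¹)) + ε / (8 * (1 + π⁻¹)) = ε / (4 * (1 + π⁻¹)) by
    field_simp; ring] at hnet𝒢
  refine (measureReal_le_iSup_abs_htDeviation_le hπ hT h_indep hlaw hN hε hM ?_ hnet𝒢).trans ?_
  · intro k hk x
    obtain ⟨g₀, -, rfl⟩ := Finset.mem_image.mp hk
    exact abs_le.mpr (projIcc _ _ _ _).2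
  · gcongr
    exact hcard ▸ Finset.card_image_le

end Deviation

lemma tendsto_mul_exp_neg_mul_of_tendsto_log_div {a : ℕ → ℝ} (ha : ∀ n, 0 ≤ a n)
    (hlog : Tendsto (fun n : ℕ => Real.log (a n) / n) atTop (𝓝 0)) {r : ℝ} (hr : 0 < r) :
    Tendsto (fun n : ℕ => a n * Real.exp (-(n * r))) atTop (𝓝 0) := by
  have hdecay : Tendsto (fun n : ℕ => Real.exp (-(n * (r / 2)))) atTop (𝓝 0) :=
    Real.tendsto_exp_neg_atTop_nhds_zero.comp
      (tendsto_natCast_atTop_atTop.atTop_mul_const (half_pos hr))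
  refine tendsto_of_tendsto_of_tendsto_of_le_of_le' tendsto_const_nhds hdecay
    (Eventually.of_forall fun n => mul_nonneg (ha n) (Real.exp_pos _).le) ?_
  filter_upwards [hlog.eventually_lt_const (half_pos hr), eventually_gt_atTop 0]
    with n hn hn0
  have hn' : (0 : ℝ) < n := Nat.cast_pos.mpr hn0
  calc a n * Real.exp (-(n * r)) ≤ Real.exp (n * (r / 2)) * Real.exp (-(n * r)) := by
        gcongr
        refine (Real.le_exp_log _).trans (Real.exp_le_exp.mpr ?_)
        rw [div_lt_iff₀ hn'] at hn
        linarith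
    _ = Real.exp (-(n * (r / 2))) := by rw [← Real.exp_add]; ring_nf

theorem stmt_11_general {S : Type*} (π : ℝ) (hπ : π ∈ Set.Ioo (0 : ℝ) 1)
    (y : (N : ℕ) → Fin N → S)
    (Ω : ℕ → Type*) [∀ N, MeasurableSpace (Ω N)]
    (P : (N : ℕ) → Measure (Ω N)) [∀ N, IsProbabilityMeasure (P N)]
    (T : (N : ℕ) → Fin N → Ω N → ℝ)
    (hTmeas : ∀ N i, Measurable (T N i))
    (hTindep : ∀ N, iIndepFun (T N) (P N))
    (hTlaw : ∀ N i, Measure.map (T N i) (P N) = bernoulliReal π)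
    (𝒢 : Set (S → ℝ))
    (F : S → ℝ) (henv : ∀ g ∈ 𝒢, ∀ x, |g x| ≤ F x)
    (𝒢M : ℝ → Set (S → ℝ))
    (h𝒢M : ∀ M, 𝒢M M = (fun g => fun x => if F x ≤ M then g x else 0) '' 𝒢)
    (hUI : ∀ δ > (0 : ℝ), ∃ M₀ : ℝ, ∀ M ≥ M₀, ∀ N : ℕ, 1 ≤ N →
      (∑ i, if M < F (y N i) then F (y N i) else 0) / (N : ℝ) ≤ δ)
    (hnet : ∀ M > (0 : ℝ), ∀ ε > (0 : ℝ), ∀ N : ℕ,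
      {m : ℕ | ∃ G₀ : Finset (S → ℝ), G₀.card = m ∧ IsNet (y N) ε (𝒢M M) G₀}.Nonempty)
    (hentropy : ∀ M > (0 : ℝ), ∀ ε > (0 : ℝ),
      Filter.Tendsto (fun N : ℕ => Real.log (covNum (y N) ε (𝒢M M)) / (N : ℝ))
        Filter.atTop (nhds 0)) :
    ∀ ε > (0 : ℝ),
      Filter.Tendsto
        (fun N : ℕ => (P N) {ω | ε ≤ ⨆ g : 𝒢,
          |(∑ i, T N i ω * g.1 (y N i)) / ((N : ℝ) * π)
            - (∑ i, g.1 (y N i)) / (N : ℝ)|})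
        Filter.atTop (nhds 0) := by
  classical
  obtain rfl : 𝒢M = fun M => (fun g x => if F x ≤ M then g x else 0) '' 𝒢 := funext h𝒢M
  intro ε hε
  have hK : 0 < 1 + π⁻¹ := by have := hπ.1; positivity
  set δ := ε / (8 * (1 + π⁻¹))
  have hδ : 0 < δ := by positivity
  obtain ⟨M₀, hM₀⟩ := hUI δ hδ
  set M := max M₀ 1
  have hM : 0 < M := lt_max_of_lt_right one_pos
  have hrate : 0 < (ε * π / M) ^ 2 / 8 := by have := hπ.1; positivity
  have hdecay := (tendsto_mul_exp_neg_mul_of_tendsto_log_div (fun N => Nat.cast_nonneg _)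
    (hentropy M hM δ hδ) hrate).const_mul 2
  rw [mul_zero] at hdecay
  have hreal : Tendsto (fun N => (P N).real
      {ω | ε ≤ ⨆ g : 𝒢, |htDeviation π (y N) (T N · ω) g|}) atTop (𝓝 0) :=
    tendsto_of_tendsto_of_tendsto_of_le_of_le' tendsto_const_nhds hdecay
      (Eventually.of_forall fun N => measureReal_nonneg) <| by
        filter_upwards [eventually_gt_atTop 0] with N hN
        exact (measureReal_le_iSup_abs_htDeviation_le_covNum hπ
          (fun i => (hTmeas N i).aemeasurable) (hTindep N) (hTlaw N) hN hε hM henv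
          (hM₀ M (le_max_left _ _) N hN) (hnet M hM δ hδ N)).trans_eq (by ring)
  exact (ENNReal.tendsto_toReal_iff (fun N => measure_ne_top _ _) ENNReal.zero_ne_top).mp
    (by rwa [ENNReal.toReal_zero])

/-- **P-Glivenko–Cantelli by entropy.** Let `𝒢` be a countable class of measurable
functions with measurable envelope `F` satisfying the uniform-integrability condition, and
suppose the `L¹(P_N)`-entropy of each truncated class `𝒢_M` is `o(N)`. Then the supremum
over `𝒢` of the deviation of the Horvitz–Thompson empirical mean (under i.i.d. Bernoulli(π)
sampling) from the population mean tends to `0` in probability. -/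
theorem stmt_11 {S : Type*} [MeasurableSpace S] (π : ℝ) (hπ : π ∈ Set.Ioo (0 : ℝ) 1)
    (y : (N : ℕ) → Fin N → S)
    (Ω : ℕ → Type*) [∀ N, MeasurableSpace (Ω N)]
    (P : (N : ℕ) → Measure (Ω N)) [∀ N, IsProbabilityMeasure (P N)]
    (T : (N : ℕ) → Fin N → Ω N → ℝ)
    (hTmeas : ∀ N i, Measurable (T N i))
    (hTindep : ∀ N, iIndepFun (T N) (P N))
    (hTlaw : ∀ N i, Measure.map (T N i) (P N) = bernoulliReal π)
    (𝒢 : Set (S → ℝ)) (h𝒢c : 𝒢.Countable) (h𝒢m : ∀ g ∈ 𝒢, Measurable g)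
    (F : S → ℝ) (hFm : Measurable F) (henv : ∀ g ∈ 𝒢, ∀ x, |g x| ≤ F x)
    (𝒢M : ℝ → Set (S → ℝ))
    (h𝒢M : ∀ M, 𝒢M M = (fun g => fun x => if F x ≤ M then g x else 0) '' 𝒢)
    (hUI : ∀ δ > (0 : ℝ), ∃ M₀ : ℝ, ∀ M ≥ M₀, ∀ N : ℕ, 1 ≤ N →
      (∑ i, if M < F (y N i) then F (y N i) else 0) / (N : ℝ) ≤ δ)
    (hnet : ∀ M > (0 : ℝ), ∀ ε > (0 : ℝ), ∀ N : ℕ,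
      {m : ℕ | ∃ G₀ : Finset (S → ℝ), G₀.card = m ∧ IsNet (y N) ε (𝒢M M) G₀}.Nonempty)
    (hentropy : ∀ M > (0 : ℝ), ∀ ε > (0 : ℝ),
      Filter.Tendsto (fun N : ℕ => Real.log (covNum (y N) ε (𝒢M M)) / (N : ℝ))
        Filter.atTop (nhds 0)) :
    ∀ ε > (0 : ℝ),
      Filter.Tendsto
        (fun N : ℕ => (P N) {ω | ε ≤ ⨆ g : 𝒢,
          |(∑ i, T N i ω * g.1 (y N i)) / ((N : ℝ) * π)
            - (∑ i, g.1 (y N i)) / (N : ℝ)|})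
        Filter.atTop (nhds 0) :=
  stmt_11_general π hπ y Ω P T hTmeas hTindep hTlaw 𝒢 F henv 𝒢M h𝒢M hUI hnet hentropy
end

section
/- For one-dimensional CDFs define the Lévy distance d_L(F₁,F₂) = inf{ ε > 0 : F₁(x−ε) − ε ≤ F₂(x) ≤ F₁(x+ε) + ε for all x ∈ ℝ }, and for bivariate CDFs define d_L(H₁,H₂) = inf{ ε > 0 : H₁(x−ε, y−ε) − ε ≤ H₂(x,y) ≤ H₁(x+ε, y+ε) + ε for all (x,y) ∈ ℝ² }. Let G₁, G₂, F₁, F₂ be CDFs of probability measures on ℝ and define the upper-Fréchet bivariate CDFs H_k(x,y) = min(G_k(x), F_k(y)) for k = 1, 2. Then d_L(H₁, H₂) ≤ 2 ( d_L(G₁,G₂) + d_L(F₁,F₂) ). In particular, if Ĝ_N → G and F̂_N → F in Lévy distance, then the corresponding comonotonic (upper-Fréchet) joint CDFs min(Ĝ_N, F̂_N) converge to min(G,F) in the bivariate Lévy distance, i.e., weakly. -/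
/-!
If `ε` is admissible in the definition of the Lévy distance both for `(G₁, G₂)` and for
`(F₁, F₂)`, then it is admissible for the pair `min (G_k x) (F_k y)`, because subtracting or
adding `ε` commutes with `min`. Admissibility is upward closed for a monotone `G₁` (resp. `F₁`),
so a common admissible `ε` can be taken as the larger of the two, giving
`d_L(H₁, H₂) ≤ max (d_L(G₁, G₂)) (d_L(F₁, F₂))`, which implies both claims.
-/

open MeasureTheory

/-- The CDF of a measure on `ℝ`. -/
noncomputable def cdfOf (μ : Measure ℝ) : ℝ → ℝ := fun x => (μ (Set.Iic x)).toReal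

/-- The Lévy distance between two one-dimensional CDFs. -/
noncomputable def levy1 (F₁ F₂ : ℝ → ℝ) : ℝ :=
  sInf {ε : ℝ | 0 < ε ∧ ∀ x, F₁ (x - ε) - ε ≤ F₂ x ∧ F₂ x ≤ F₁ (x + ε) + ε}

/-- The Lévy distance between two bivariate CDFs. -/
noncomputable def levy2 (H₁ H₂ : ℝ → ℝ → ℝ) : ℝ :=
  sInf {ε : ℝ | 0 < ε ∧ ∀ x y,
    H₁ (x - ε) (y - ε) - ε ≤ H₂ x y ∧ H₂ x y ≤ H₁ (x + ε) (y + ε) + ε}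

open Filter

/-- `ε` is admissible in the infimum defining `levy1 F₁ F₂`
(and `IsLevyBound₂` likewise for `levy2`). -/
def IsLevyBound (F₁ F₂ : ℝ → ℝ) (ε : ℝ) : Prop :=
  0 < ε ∧ ∀ x, F₁ (x - ε) - ε ≤ F₂ x ∧ F₂ x ≤ F₁ (x + ε) + ε

def IsLevyBound₂ (H₁ H₂ : ℝ → ℝ → ℝ) (ε : ℝ) : Prop :=
  0 < ε ∧ ∀ x y, H₁ (x - ε) (y - ε) - ε ≤ H₂ x y ∧ H₂ x y ≤ H₁ (x + ε) (y + ε) + ε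

theorem levy1_nonneg (F₁ F₂ : ℝ → ℝ) : 0 ≤ levy1 F₁ F₂ :=
  Real.sInf_nonneg fun _ hε => hε.1.le

theorem levy2_nonneg (H₁ H₂ : ℝ → ℝ → ℝ) : 0 ≤ levy2 H₁ H₂ :=
  Real.sInf_nonneg fun _ hε => hε.1.le

theorem levy2_le_of_isLevyBound₂ {H₁ H₂ : ℝ → ℝ → ℝ} {ε : ℝ} (h : IsLevyBound₂ H₁ H₂ ε) :
    levy2 H₁ H₂ ≤ ε :=
  csInf_le ⟨0, fun _ hδ => hδ.1.le⟩ h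

theorem IsLevyBound.mono {F₁ F₂ : ℝ → ℝ} {a b : ℝ} (hF₁ : Monotone F₁)
    (ha : IsLevyBound F₁ F₂ a) (hab : a ≤ b) : IsLevyBound F₁ F₂ b := by
  refine ⟨ha.1.trans_le hab, fun x => ⟨?_, ?_⟩⟩
  · have := hF₁ (show x - b ≤ x - a by linarith)
    linarith [(ha.2 x).1]
  · have := hF₁ (show x + a ≤ x + b by linarith)
    linarith [(ha.2 x).2]

theorem isLevyBound_one {F₁ F₂ : ℝ → ℝ} (h₁ : ∀ x, F₁ x ∈ Set.Icc 0 1)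
    (h₂ : ∀ x, F₂ x ∈ Set.Icc 0 1) : IsLevyBound F₁ F₂ 1 :=
  ⟨one_pos, fun x => ⟨by linarith [(h₁ (x - 1)).2, (h₂ x).1],
    by linarith [(h₂ x).2, (h₁ (x + 1)).1]⟩⟩

theorem IsLevyBound.min {G₁ G₂ F₁ F₂ : ℝ → ℝ} {ε : ℝ} (hG : IsLevyBound G₁ G₂ ε)
    (hF : IsLevyBound F₁ F₂ ε) :
    IsLevyBound₂ (fun x y => min (G₁ x) (F₁ y)) (fun x y => min (G₂ x) (F₂ y)) ε := by
  refine ⟨hG.1, fun x y => ⟨?_, ?_⟩⟩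
  · rw [← min_sub_sub_right]
    exact min_le_min (hG.2 x).1 (hF.2 y).1
  · rw [← min_add_add_right]
    exact min_le_min (hG.2 x).2 (hF.2 y).2

theorem levy2_min_le_max {G₁ G₂ F₁ F₂ : ℝ → ℝ} (hG₁ : Monotone G₁) (hF₁ : Monotone F₁)
    (hG : ∃ ε, IsLevyBound G₁ G₂ ε) (hF : ∃ ε, IsLevyBound F₁ F₂ ε) :
    levy2 (fun x y => min (G₁ x) (F₁ y)) (fun x y => min (G₂ x) (F₂ y))
      ≤ max (levy1 G₁ G₂) (levy1 F₁ F₂) := by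
  refine le_of_forall_pos_lt_add fun δ hδ => ?_
  obtain ⟨a, ha : IsLevyBound G₁ G₂ a, ha_lt⟩ := Real.lt_sInf_add_pos hG hδ
  obtain ⟨b, hb : IsLevyBound F₁ F₂ b, hb_lt⟩ := Real.lt_sInf_add_pos hF hδ
  have hab : IsLevyBound₂ (fun x y => min (G₁ x) (F₁ y)) (fun x y => min (G₂ x) (F₂ y))
      (max a b) :=
    (ha.mono hG₁ (le_max_left a b)).min (hb.mono hF₁ (le_max_right a b))
  calc _ ≤ max a b := levy2_le_of_isLevyBound₂ hab
    _ < max (levy1 G₁ G₂) (levy1 F₁ F₂) + δ := by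
      rw [← max_add_add_right]
      exact max_lt_max ha_lt hb_lt

theorem monotone_cdfOf (μ : Measure ℝ) [IsFiniteMeasure μ] : Monotone (cdfOf μ) :=
  fun _ _ hxy => measureReal_mono (Set.Iic_subset_Iic.2 hxy)

theorem cdfOf_mem_Icc (μ : Measure ℝ) [IsProbabilityMeasure μ] (x : ℝ) :
    cdfOf μ x ∈ Set.Icc 0 1 :=
  ⟨measureReal_nonneg, measureReal_le_one⟩

theorem levy2_min_cdfOf_le_max (μG₁ μG₂ μF₁ μF₂ : Measure ℝ)
    [IsProbabilityMeasure μG₁] [IsProbabilityMeasure μG₂]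
    [IsProbabilityMeasure μF₁] [IsProbabilityMeasure μF₂] :
    levy2 (fun x y => min (cdfOf μG₁ x) (cdfOf μF₁ y))
        (fun x y => min (cdfOf μG₂ x) (cdfOf μF₂ y))
      ≤ max (levy1 (cdfOf μG₁) (cdfOf μG₂)) (levy1 (cdfOf μF₁) (cdfOf μF₂)) :=
  levy2_min_le_max (monotone_cdfOf μG₁) (monotone_cdfOf μF₁)
    ⟨1, isLevyBound_one (cdfOf_mem_Icc μG₁) (cdfOf_mem_Icc μG₂)⟩
    ⟨1, isLevyBound_one (cdfOf_mem_Icc μF₁) (cdfOf_mem_Icc μF₂)⟩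

/-- **Lévy-distance stability of the upper Fréchet–Hoeffding joint CDF.** For CDFs
`G₁, G₂, F₁, F₂` of probability measures on `ℝ`, the comonotonic joint CDFs
`H_k(x,y) = min (G_k x) (F_k y)` satisfy `d_L(H₁,H₂) ≤ 2 (d_L(G₁,G₂) + d_L(F₁,F₂))`.
In particular, if `Ĝ_N → G` and `F̂_N → F` in Lévy distance then
`min (Ĝ_N) (F̂_N) → min G F` in the bivariate Lévy distance. -/
theorem stmt_14 :
    (∀ (μG₁ μG₂ μF₁ μF₂ : Measure ℝ),
      IsProbabilityMeasure μG₁ → IsProbabilityMeasure μG₂ →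
      IsProbabilityMeasure μF₁ → IsProbabilityMeasure μF₂ →
      levy2 (fun x y => min (cdfOf μG₁ x) (cdfOf μF₁ y))
          (fun x y => min (cdfOf μG₂ x) (cdfOf μF₂ y))
        ≤ 2 * (levy1 (cdfOf μG₁) (cdfOf μG₂) + levy1 (cdfOf μF₁) (cdfOf μF₂)))
    ∧ (∀ (μG μF : Measure ℝ) (μGs μFs : ℕ → Measure ℝ),
      IsProbabilityMeasure μG → IsProbabilityMeasure μF →
      (∀ n, IsProbabilityMeasure (μGs n)) → (∀ n, IsProbabilityMeasure (μFs n)) →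
      Filter.Tendsto (fun n => levy1 (cdfOf (μGs n)) (cdfOf μG)) Filter.atTop (nhds 0) →
      Filter.Tendsto (fun n => levy1 (cdfOf (μFs n)) (cdfOf μF)) Filter.atTop (nhds 0) →
      Filter.Tendsto
        (fun n => levy2 (fun x y => min (cdfOf (μGs n) x) (cdfOf (μFs n) y))
          (fun x y => min (cdfOf μG x) (cdfOf μF y)))
        Filter.atTop (nhds 0)) := by
  refine ⟨fun μG₁ μG₂ μF₁ μF₂ _ _ _ _ => ?_, fun μG μF μGs μFs _ _ hGs hFs hG hF => ?_⟩
  · have hG := levy1_nonneg (cdfOf μG₁) (cdfOf μG₂)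
    have hF := levy1_nonneg (cdfOf μF₁) (cdfOf μF₂)
    calc _ ≤ max (levy1 (cdfOf μG₁) (cdfOf μG₂)) (levy1 (cdfOf μF₁) (cdfOf μF₂)) :=
          levy2_min_cdfOf_le_max μG₁ μG₂ μF₁ μF₂
      _ ≤ _ := by rw [max_le_iff]; constructor <;> linarith
  · have hmax : Tendsto (fun n => max (levy1 (cdfOf (μGs n)) (cdfOf μG))
        (levy1 (cdfOf (μFs n)) (cdfOf μF))) atTop (nhds 0) := by
      simpa using hG.max hF
    refine squeeze_zero (fun n => levy2_nonneg _ _) (fun n => ?_) hmax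
    have := hGs n
    have := hFs n
    exact levy2_min_cdfOf_le_max (μGs n) μG (μFs n) μF
end

section
/- Let (G_N)_{N≥1}, G and (F_N)_{N≥1}, F be probability measures on ℝ such that G_N → G and F_N → F weakly, and such that the families (G_N) and (F_N) are uniformly square-integrable, i.e., sup_N ∫ x² 1{x² ≥ β} dG_N → 0 and sup_N ∫ x² 1{x² ≥ β} dF_N → 0 as β → ∞. Denote by G_N⁻¹, F_N⁻¹, G⁻¹, F⁻¹ the left-continuous quantile functions of the corresponding CDFs. Then, as N → ∞: (i) ∫₀¹ G_N⁻¹(u) F_N⁻¹(u) du → ∫₀¹ G⁻¹(u) F⁻¹(u) du, and (ii) ∫₀¹ G_N⁻¹(u) F_N⁻¹(1−u) du → ∫₀¹ G⁻¹(u) F⁻¹(1−u) du. That is, the comonotonic and countermonotonic cross-moments (the extremal values of ∫ xy over all couplings of the given marginals) converge under weak convergence plus uniform square integrability of the marginals. -/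
/-!
By the quantile transform, `quantileOf μ` has law `μ` under Lebesgue measure on `(0, 1)`, so both
cross-moments are expectations `∫ X_N Y_N` on `(0, 1)` with `X_N = G_N⁻¹` and `Y_N = F_N⁻¹ ∘ σ`,
where `σ` is the identity or the measure-preserving reflection `u ↦ 1 - u`.

Weak convergence gives convergence of the CDFs at every non-atom of the limit, hence convergence of
the quantile functions at every continuity point of the (monotone) limit quantile function, i.e.
almost everywhere. The tail bound `|xy| 1{|xy| ≥ C} ≤ x² 1{x² ≥ C} + y² 1{y² ≥ C}` turns uniform
square-integrability of the laws into uniform integrability of the products `X_N Y_N`, and Vitali's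
convergence theorem concludes.
-/

open MeasureTheory

/-- The left-continuous quantile function of a measure `μ` on `ℝ`:
`μ⁻¹(u) = inf {y : F(y) ≥ u}` where `F(y) = μ(-∞, y]`. -/
noncomputable def quantileOf (μ : Measure ℝ) (u : ℝ) : ℝ :=
  sInf {y : ℝ | u ≤ (μ (Set.Iic y)).toReal}

open Set Filter ProbabilityTheory Topology
open scoped ENNReal NNReal

noncomputable def tailSq (β x : ℝ) : ℝ≥0∞ := ENNReal.ofReal (if β ≤ x ^ 2 then x ^ 2 else 0)

def UnifSqIntegrable {ι : Type*} (μs : ι → Measure ℝ) : Prop :=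
  ∀ δ > (0 : ℝ), ∃ β₀ : ℝ, 0 < β₀ ∧ ∀ β ≥ β₀, ∀ i, ∫⁻ x, tailSq β x ∂(μs i) ≤ ENNReal.ofReal δ

lemma measurable_tailSq (β : ℝ) : Measurable (tailSq β) :=
  (Measurable.ite (measurableSet_le measurable_const (measurable_id.pow_const 2))
    (measurable_id.pow_const 2) measurable_const).ennreal_ofReal

lemma tailSq_zero_le (β x : ℝ) : tailSq 0 x ≤ tailSq β x + ENNReal.ofReal β := by
  unfold tailSq
  split_ifs with h₀ h
  · exact le_self_add
  · exact le_add_left (ENNReal.ofReal_le_ofReal (not_le.1 h).le)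
  · exact absurd (sq_nonneg x) h₀
  · exact absurd (sq_nonneg x) h₀

lemma ofReal_abs_mul_le_tailSq_add {C a b : ℝ} (h : C ≤ |a * b|) :
    ENNReal.ofReal |a * b| ≤ tailSq C a + tailSq C b := by
  wlog hab : |a| ≤ |b| generalizing a b
  · rw [mul_comm] at h ⊢
    rw [add_comm]
    exact this h (le_of_not_ge hab)
  have hb : |a * b| ≤ b ^ 2 := by
    rw [abs_mul, ← sq_abs b, sq]
    exact mul_le_mul_of_nonneg_right hab (abs_nonneg b)
  rw [tailSq, tailSq, if_pos (h.trans hb)]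
  exact le_add_left (ENNReal.ofReal_le_ofReal hb)

lemma UnifSqIntegrable.exists_lintegral_tailSq_zero_le {ι : Type*} {μs : ι → Measure ℝ}
    [∀ i, IsProbabilityMeasure (μs i)] (h : UnifSqIntegrable μs) :
    ∃ C : ℝ≥0∞, C ≠ ∞ ∧ ∀ i, ∫⁻ x, tailSq 0 x ∂(μs i) ≤ C := by
  obtain ⟨β₀, -, hβ₀⟩ := h 1 one_pos
  refine ⟨ENNReal.ofReal 1 + ENNReal.ofReal β₀, by finiteness, fun i => ?_⟩
  calc ∫⁻ x, tailSq 0 x ∂(μs i) ≤ ∫⁻ x, (tailSq β₀ x + ENNReal.ofReal β₀) ∂(μs i) :=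
        lintegral_mono (tailSq_zero_le β₀)
    _ = ∫⁻ x, tailSq β₀ x ∂(μs i) + ENNReal.ofReal β₀ := by
        rw [lintegral_add_right _ measurable_const, lintegral_const, measure_univ, mul_one]
    _ ≤ ENNReal.ofReal 1 + ENNReal.ofReal β₀ := by gcongr; exact hβ₀ β₀ le_rfl i

section Products

variable {Ω : Type*} [MeasurableSpace Ω] {P : Measure Ω}

lemma eLpNorm_indicator_mul_le_lintegral_tailSq {X Y : Ω → ℝ} (hX : AEMeasurable X P)
    (hY : AEMeasurable Y P) (C : ℝ≥0) :
    eLpNorm ({ω | C ≤ ‖X ω * Y ω‖₊}.indicator fun ω => X ω * Y ω) 1 P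
      ≤ ∫⁻ x, tailSq C x ∂(P.map X) + ∫⁻ x, tailSq C x ∂(P.map Y) := by
  rw [lintegral_map' (measurable_tailSq _).aemeasurable hX,
    lintegral_map' (measurable_tailSq _).aemeasurable hY,
    ← lintegral_add_left' (f := fun ω => tailSq C (X ω))
      ((measurable_tailSq _).comp_aemeasurable hX),
    eLpNorm_one_eq_lintegral_enorm]
  refine lintegral_mono fun ω => ?_
  by_cases hω : (C : ℝ) ≤ |X ω * Y ω|
  · rw [indicator_of_mem (by simpa [← NNReal.coe_le_coe] using hω), Real.enorm_eq_ofReal_abs]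
    exact ofReal_abs_mul_le_tailSq_add hω
  · rw [indicator_of_notMem (by simpa [← NNReal.coe_le_coe] using hω), enorm_zero]
    exact zero_le

lemma eLpNorm_mul_le_lintegral_tailSq {X Y : Ω → ℝ} (hX : AEMeasurable X P)
    (hY : AEMeasurable Y P) :
    eLpNorm (fun ω => X ω * Y ω) 1 P
      ≤ ∫⁻ x, tailSq 0 x ∂(P.map X) + ∫⁻ x, tailSq 0 x ∂(P.map Y) := by
  simpa using eLpNorm_indicator_mul_le_lintegral_tailSq hX hY 0

lemma unifIntegrable_mul_of_unifSqIntegrable {X Y : ℕ → Ω → ℝ} (hX : ∀ n, AEMeasurable (X n) P)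
    (hY : ∀ n, AEMeasurable (Y n) P) (hXui : UnifSqIntegrable fun n => P.map (X n))
    (hYui : UnifSqIntegrable fun n => P.map (Y n)) :
    UnifIntegrable (fun n ω => X n ω * Y n ω) 1 P := by
  refine unifIntegrable_of le_rfl ENNReal.one_ne_top
    (fun n => ((hX n).mul (hY n)).aestronglyMeasurable) fun ε hε => ?_
  obtain ⟨β₁, hβ₁, hX'⟩ := hXui (ε / 2) (half_pos hε)
  obtain ⟨β₂, -, hY'⟩ := hYui (ε / 2) (half_pos hε)
  have hβ : ((max β₁ β₂).toNNReal : ℝ) = max β₁ β₂ :=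
    Real.coe_toNNReal _ (hβ₁.le.trans (le_max_left _ _))
  refine ⟨(max β₁ β₂).toNNReal, fun n =>
    (eLpNorm_indicator_mul_le_lintegral_tailSq (hX n) (hY n) _).trans ?_⟩
  rw [hβ, ← add_halves ε, ENNReal.ofReal_add (half_pos hε).le (half_pos hε).le]
  exact add_le_add (hX' _ (le_max_left _ _) n) (hY' _ (le_max_right _ _) n)

theorem tendsto_integral_mul_of_unifSqIntegrable [IsProbabilityMeasure P]
    {X Y : ℕ → Ω → ℝ} {X' Y' : Ω → ℝ}
    (hX : ∀ n, AEMeasurable (X n) P) (hY : ∀ n, AEMeasurable (Y n) P)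
    (hXui : UnifSqIntegrable fun n => P.map (X n)) (hYui : UnifSqIntegrable fun n => P.map (Y n))
    (hXlim : ∀ᵐ ω ∂P, Tendsto (fun n => X n ω) atTop (𝓝 (X' ω)))
    (hYlim : ∀ᵐ ω ∂P, Tendsto (fun n => Y n ω) atTop (𝓝 (Y' ω))) :
    Tendsto (fun n => ∫ ω, X n ω * Y n ω ∂P) atTop (𝓝 (∫ ω, X' ω * Y' ω ∂P)) := by
  have := fun n => Measure.isProbabilityMeasure_map (μ := P) (hX n)
  have := fun n => Measure.isProbabilityMeasure_map (μ := P) (hY n)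
  have hmeas : ∀ n, AEStronglyMeasurable (fun ω => X n ω * Y n ω) P :=
    fun n => ((hX n).mul (hY n)).aestronglyMeasurable
  have hlim : ∀ᵐ ω ∂P, Tendsto (fun n => X n ω * Y n ω) atTop (𝓝 (X' ω * Y' ω)) := by
    filter_upwards [hXlim, hYlim] with ω hXω hYω using hXω.mul hYω
  obtain ⟨CX, hCX, hXC⟩ := hXui.exists_lintegral_tailSq_zero_le
  obtain ⟨CY, hCY, hYC⟩ := hYui.exists_lintegral_tailSq_zero_le
  have hbound : ∀ n, eLpNorm (fun ω => X n ω * Y n ω) 1 P ≤ CX + CY :=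
    fun n => (eLpNorm_mul_le_lintegral_tailSq (hX n) (hY n)).trans (add_le_add (hXC n) (hYC n))
  have hmemLp : ∀ n, MemLp (fun ω => X n ω * Y n ω) 1 P :=
    fun n => ⟨hmeas n, (hbound n).trans_lt (by finiteness)⟩
  have hmemLp_lim : MemLp (fun ω => X' ω * Y' ω) 1 P := by
    refine ⟨aestronglyMeasurable_of_tendsto_ae atTop hmeas hlim, ?_⟩
    refine (Lp.eLpNorm_lim_le_liminf_eLpNorm hmeas _ hlim).trans_lt ?_
    exact (liminf_le_of_frequently_le' (Frequently.of_forall hbound)).trans_lt (by finiteness)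
  refine tendsto_integral_of_L1' _ hmemLp_lim.aestronglyMeasurable
    (Eventually.of_forall fun n => (hmemLp n).integrable le_rfl) ?_
  exact tendsto_Lp_finite_of_tendsto_ae le_rfl ENNReal.one_ne_top hmeas hmemLp_lim
    (unifIntegrable_mul_of_unifSqIntegrable hX hY hXui hYui) hlim

end Products

local notation "𝕌" => Measure.restrict volume (Ioo (0 : ℝ) 1)

instance : IsProbabilityMeasure 𝕌 := ⟨by simp⟩

section Quantile

variable (μ : Measure ℝ)

lemma nonempty_setOf_le_cdf {u : ℝ} (hu : u < 1) : {y | u ≤ cdf μ y}.Nonempty :=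
  (((tendsto_cdf_atTop μ).eventually (eventually_gt_nhds hu)).exists).imp fun _ => le_of_lt

lemma bddBelow_setOf_le_cdf {u : ℝ} (hu : 0 < u) : BddBelow {y | u ≤ cdf μ y} := by
  obtain ⟨y₀, hy₀⟩ := ((tendsto_cdf_atBot μ).eventually (eventually_lt_nhds hu)).exists
  exact ⟨y₀, fun y hy => le_of_not_gt fun hy' => (hy.trans (monotone_cdf μ hy'.le)).not_gt hy₀⟩

variable [IsProbabilityMeasure μ]

lemma quantileOf_eq_sInf_cdf (u : ℝ) : quantileOf μ u = sInf {y | u ≤ cdf μ y} := by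
  simp only [quantileOf, cdf_eq_real, measureReal_def]

variable {μ}

lemma quantileOf_le_iff {u x : ℝ} (hu : u ∈ Ioo 0 1) : quantileOf μ u ≤ x ↔ u ≤ cdf μ x := by
  refine ⟨fun h => ?_, fun h => (quantileOf_eq_sInf_cdf μ u).trans_le
    (csInf_le (bddBelow_setOf_le_cdf μ hu.1) h)⟩
  have hright : ∀ y > x, u ≤ cdf μ y := fun y hy => by
    rw [quantileOf_eq_sInf_cdf] at h
    obtain ⟨z, hz, hzy⟩ := exists_lt_of_csInf_lt (nonempty_setOf_le_cdf μ hu.2) (h.trans_lt hy)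
    exact hz.trans (monotone_cdf μ hzy.le)
  exact ge_of_tendsto
    ((cdf μ).right_continuous x |>.mono_left (nhdsWithin_mono _ Ioi_subset_Ici_self))
    (eventually_nhdsWithin_of_forall hright)

lemma lt_quantileOf_iff {u x : ℝ} (hu : u ∈ Ioo 0 1) : x < quantileOf μ u ↔ cdf μ x < u := by
  simpa only [not_le] using (quantileOf_le_iff hu).not

variable (μ)

lemma monotoneOn_quantileOf : MonotoneOn (quantileOf μ) (Ioo 0 1) := fun u hu v hv huv => by
  simp only [quantileOf_eq_sInf_cdf]
  exact csInf_le_csInf (bddBelow_setOf_le_cdf μ hu.1) (nonempty_setOf_le_cdf μ hv.2)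
    fun y hy => huv.trans hy

lemma aemeasurable_quantileOf : AEMeasurable (quantileOf μ) 𝕌 :=
  aemeasurable_restrict_of_monotoneOn measurableSet_Ioo (monotoneOn_quantileOf μ)

lemma map_quantileOf : Measure.map (quantileOf μ) 𝕌 = μ := by
  have := Measure.isProbabilityMeasure_map (aemeasurable_quantileOf μ)
  refine Measure.ext_of_Iic _ _ fun x => ?_
  rw [Measure.map_apply_of_aemeasurable (aemeasurable_quantileOf μ) measurableSet_Iic,
    Measure.restrict_apply' measurableSet_Ioo, ← ofReal_cdf μ x]
  have hset : quantileOf μ ⁻¹' Iic x ∩ Ioo 0 1 = Ioo 0 1 ∩ Iic (cdf μ x) := by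
    ext u
    simp only [mem_inter_iff, mem_preimage, mem_Iic]
    exact ⟨fun ⟨h, hu⟩ => ⟨hu, (quantileOf_le_iff hu).1 h⟩,
      fun ⟨hu, h⟩ => ⟨(quantileOf_le_iff hu).2 h, hu⟩⟩
  rw [hset]
  refine le_antisymm ?_ ?_
  · calc volume (Ioo 0 1 ∩ Iic (cdf μ x)) ≤ volume (Ioc 0 (cdf μ x)) :=
          measure_mono fun u hu => ⟨hu.1.1, hu.2⟩
      _ = ENNReal.ofReal (cdf μ x) := by rw [Real.volume_Ioc, sub_zero]
  · calc ENNReal.ofReal (cdf μ x) = volume (Ioo 0 (cdf μ x)) := by rw [Real.volume_Ioo, sub_zero]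
      _ ≤ volume (Ioo 0 1 ∩ Iic (cdf μ x)) :=
          measure_mono fun u hu => ⟨⟨hu.1, hu.2.trans_le (cdf_le_one μ x)⟩, hu.2.le⟩

lemma map_quantileOf_comp {σ : ℝ → ℝ} (hσ : MeasurePreserving σ 𝕌 𝕌) :
    Measure.map (fun u => quantileOf μ (σ u)) 𝕌 = μ := by
  have hq : AEMeasurable (quantileOf μ) (Measure.map σ 𝕌) := by
    rw [hσ.map_eq]; exact aemeasurable_quantileOf μ
  rw [← Function.comp_def, ← AEMeasurable.map_map_of_aemeasurable hq hσ.aemeasurable, hσ.map_eq,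
    map_quantileOf]

end Quantile

lemma exists_mem_Ioo_measure_singleton_eq_zero (μ : Measure ℝ) [SFinite μ] {a b : ℝ}
    (hab : a < b) : ∃ x ∈ Ioo a b, μ {x} = 0 := by
  have hatoms : {x : ℝ | 0 < μ {y | id y = x}}.Countable :=
    Measure.countable_meas_level_set_pos measurable_id
  obtain ⟨x, hx, hxab⟩ := (hatoms.dense_compl ℝ).exists_between hab
  exact ⟨x, hxab, by simpa using hx⟩

section WeakConvergence

variable {ι : Type*} {l : Filter ι} {μs : ι → ProbabilityMeasure ℝ} {μ : ProbabilityMeasure ℝ}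

lemma tendsto_cdf_of_tendsto (h : Tendsto μs l (𝓝 μ)) {x : ℝ} (hx : (μ : Measure ℝ) {x} = 0) :
    Tendsto (fun i => cdf (μs i : Measure ℝ) x) l (𝓝 (cdf μ x)) := by
  have hIic := ProbabilityMeasure.tendsto_measure_of_null_frontier_of_tendsto' h
    (E := Iic x) (by rwa [frontier_Iic])
  simpa only [cdf_eq_real, measureReal_def, Function.comp_def] using
    (ENNReal.tendsto_toReal (measure_ne_top _ _)).comp hIic

lemma tendsto_quantileOf_of_continuousWithinAt (h : Tendsto μs l (𝓝 μ)) {u : ℝ}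
    (hu : u ∈ Ioo 0 1) (hcont : ContinuousWithinAt (quantileOf μ) (Ioo 0 1) u) :
    Tendsto (fun i => quantileOf (μs i) u) l (𝓝 (quantileOf μ u)) := by
  refine tendsto_order.2 ⟨fun b hb => ?_, fun b hb => ?_⟩
  · obtain ⟨x, hx, hx0⟩ := exists_mem_Ioo_measure_singleton_eq_zero (μ : Measure ℝ) hb
    have hcdf : cdf μ x < u := (lt_quantileOf_iff hu).1 hx.2
    filter_upwards [(tendsto_cdf_of_tendsto h hx0).eventually (eventually_lt_nhds hcdf)] with i hi
    exact hx.1.trans ((lt_quantileOf_iff hu).2 hi)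
  · have hev : ∀ᶠ v in 𝓝[Ioo u 1] u, quantileOf μ v < b :=
      (hcont.mono (Ioo_subset_Ioo_left hu.1.le)).eventually (eventually_lt_nhds hb)
    have := left_nhdsWithin_Ioo_neBot hu.2
    obtain ⟨v, hvb, hv⟩ := (hev.and self_mem_nhdsWithin).exists
    obtain ⟨x, hx, hx0⟩ := exists_mem_Ioo_measure_singleton_eq_zero (μ : Measure ℝ) hvb
    have hv01 : v ∈ Ioo 0 1 := ⟨hu.1.trans hv.1, hv.2⟩
    have hcdf : u < cdf μ x := hv.1.trans_le ((quantileOf_le_iff hv01).1 hx.1.le)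
    filter_upwards [(tendsto_cdf_of_tendsto h hx0).eventually (eventually_gt_nhds hcdf)] with i hi
    exact ((quantileOf_le_iff hu).2 hi.le).trans_lt hx.2

lemma ae_tendsto_quantileOf (h : Tendsto μs l (𝓝 μ)) :
    ∀ᵐ u ∂𝕌, Tendsto (fun i => quantileOf (μs i) u) l (𝓝 (quantileOf μ u)) := by
  have hdisc := (monotoneOn_quantileOf (μ : Measure ℝ)).countable_not_continuousWithinAt
  filter_upwards [ae_restrict_mem measurableSet_Ioo,
    ae_restrict_of_ae (measure_eq_zero_iff_ae_notMem.1 (hdisc.measure_zero volume))]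
    with u hu hcont
  exact tendsto_quantileOf_of_continuousWithinAt h hu (not_not.1 fun h' => hcont ⟨hu, h'⟩)

end WeakConvergence

theorem tendsto_integral_quantileOf_mul {μGs μFs : ℕ → ProbabilityMeasure ℝ}
    {μG μF : ProbabilityMeasure ℝ} (hG : Tendsto μGs atTop (𝓝 μG))
    (hF : Tendsto μFs atTop (𝓝 μF)) (hGui : UnifSqIntegrable fun N => (μGs N : Measure ℝ))
    (hFui : UnifSqIntegrable fun N => (μFs N : Measure ℝ)) {σ : ℝ → ℝ}
    (hσ : MeasurePreserving σ 𝕌 𝕌) :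
    Tendsto (fun N => ∫ u, quantileOf (μGs N) u * quantileOf (μFs N) (σ u) ∂𝕌) atTop
      (𝓝 (∫ u, quantileOf μG u * quantileOf μF (σ u) ∂𝕌)) := by
  refine tendsto_integral_mul_of_unifSqIntegrable (fun N => aemeasurable_quantileOf _)
    (fun N => (aemeasurable_quantileOf _).comp_quasiMeasurePreserving hσ.quasiMeasurePreserving)
    ?_ ?_ (ae_tendsto_quantileOf hG) (hσ.quasiMeasurePreserving.ae (ae_tendsto_quantileOf hF))
  · simpa only [map_quantileOf] using hGui
  · simpa only [map_quantileOf_comp _ hσ] using hFui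

lemma measurePreserving_one_sub : MeasurePreserving (fun u : ℝ => 1 - u) 𝕌 𝕌 := by
  have h := (volume.measurePreserving_sub_left (1 : ℝ)).restrict_preimage
    (s := Ioo (0 : ℝ) 1) measurableSet_Ioo
  rwa [preimage_const_sub_Ioo, sub_zero, sub_self] at h

lemma intervalIntegral_zero_one_eq_integral_Ioo (f : ℝ → ℝ) :
    ∫ u in (0 : ℝ)..1, f u = ∫ u, f u ∂𝕌 := by
  rw [intervalIntegral.integral_of_le zero_le_one, integral_Ioc_eq_integral_Ioo]

/-- **Convergence of the extremal (comonotonic and countermonotonic) cross-moments.** If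
`G_N → G` and `F_N → F` weakly and the families `(G_N)` and `(F_N)` are uniformly
square-integrable, then `∫₀¹ G_N⁻¹(u) F_N⁻¹(u) du → ∫₀¹ G⁻¹(u) F⁻¹(u) du` and
`∫₀¹ G_N⁻¹(u) F_N⁻¹(1-u) du → ∫₀¹ G⁻¹(u) F⁻¹(1-u) du`. -/
theorem stmt_17 (μGs μFs : ℕ → Measure ℝ) (μG μF : Measure ℝ)
    [IsProbabilityMeasure μG] [IsProbabilityMeasure μF]
    (hGsp : ∀ N, IsProbabilityMeasure (μGs N)) (hFsp : ∀ N, IsProbabilityMeasure (μFs N))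
    (hGw : ∀ f : BoundedContinuousFunction ℝ ℝ,
      Filter.Tendsto (fun N => ∫ x, f x ∂(μGs N)) Filter.atTop (nhds (∫ x, f x ∂μG)))
    (hFw : ∀ f : BoundedContinuousFunction ℝ ℝ,
      Filter.Tendsto (fun N => ∫ x, f x ∂(μFs N)) Filter.atTop (nhds (∫ x, f x ∂μF)))
    (hGui : ∀ δ > (0 : ℝ), ∃ β₀ : ℝ, 0 < β₀ ∧ ∀ β ≥ β₀, ∀ N,
      ∫⁻ x : ℝ, ENNReal.ofReal (if β ≤ x ^ 2 then x ^ 2 else 0) ∂(μGs N)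
        ≤ ENNReal.ofReal δ)
    (hFui : ∀ δ > (0 : ℝ), ∃ β₀ : ℝ, 0 < β₀ ∧ ∀ β ≥ β₀, ∀ N,
      ∫⁻ x : ℝ, ENNReal.ofReal (if β ≤ x ^ 2 then x ^ 2 else 0) ∂(μFs N)
        ≤ ENNReal.ofReal δ) :
    Filter.Tendsto
        (fun N => ∫ u in (0:ℝ)..1, quantileOf (μGs N) u * quantileOf (μFs N) u)
        Filter.atTop (nhds (∫ u in (0:ℝ)..1, quantileOf μG u * quantileOf μF u))
      ∧ Filter.Tendsto
        (fun N => ∫ u in (0:ℝ)..1, quantileOf (μGs N) u * quantileOf (μFs N) (1 - u))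
        Filter.atTop (nhds (∫ u in (0:ℝ)..1, quantileOf μG u * quantileOf μF (1 - u))) := by
  have hG : Tendsto (β := ProbabilityMeasure ℝ) (fun N => ⟨μGs N, hGsp N⟩) atTop
      (𝓝 ⟨μG, inferInstance⟩) :=
    ProbabilityMeasure.tendsto_iff_forall_integral_tendsto.2 hGw
  have hF : Tendsto (β := ProbabilityMeasure ℝ) (fun N => ⟨μFs N, hFsp N⟩) atTop
      (𝓝 ⟨μF, inferInstance⟩) :=
    ProbabilityMeasure.tendsto_iff_forall_integral_tendsto.2 hFw
  simp only [intervalIntegral_zero_one_eq_integral_Ioo]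
  exact ⟨tendsto_integral_quantileOf_mul hG hF hGui hFui (MeasurePreserving.id _),
    tendsto_integral_quantileOf_mul hG hF hGui hFui measurePreserving_one_sub⟩
end
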